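/- arXiv:1509.08030 — 5 statements merged into one kernel-verified Lean document; each statement's English description precedes it below -/
import Mathlib

section
/- For all integers i, j ≥ 2, the product of ideals M_i(A_2)·M_j(A_2) is contained in M_{i+j−1}(A_2), where A_2 is the free associative algebra on two generators over a field of characteristic zero. -/
/-- Lower central series of an associative unital algebra `R` over `K`, as `K`-submodules:
`lowerCentral K R 1 = ⊤` and, for `i ≥ 1`, `lowerCentral K R (i+1)` is the `K`-linear span of
the brackets `⁅a, l⁆ = a * l - l * a` with `a : R` and `l ∈ lowerCentral K R i`.
(By convention `lowerCentral K R 0 = ⊤` as well; only indices `i ≥ 1` are used.) -/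
def lowerCentral (K : Type*) [CommRing K] (R : Type*) [Ring R] [Algebra K R] : ℕ → Submodule K R
  | 0 => ⊤
  | 1 => ⊤
  | n + 2 => Submodule.span K
      {x : R | ∃ a : R, ∃ l ∈ lowerCentral K R (n + 1), x = a * l - l * a}

/-- `lcsIdeal K R i` is the two-sided ideal `M_i(R)` of `R` generated by `lowerCentral K R i`,
realized as the `K`-submodule spanned by all products `a * l * b` with `a b : R` and
`l ∈ lowerCentral K R i`.  Products of such ideals are taken using the multiplication of
`Submodule K R` (the span of pairwise products), which agrees with the product of
two-sided ideals. -/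
def lcsIdeal (K : Type*) [CommRing K] (R : Type*) [Ring R] [Algebra K R] (i : ℕ) : Submodule K R :=
  Submodule.span K {x : R | ∃ a b : R, ∃ l ∈ lowerCentral K R i, x = a * l * b}

set_option linter.unusedSectionVars false
set_option linter.unnecessarySimpa false

namespace LCS2

variable (K : Type*) [Field K] [CharZero K]

local notation "A" => FreeAlgebra K (Fin 2)

noncomputable def Xg : FreeAlgebra K (Fin 2) := FreeAlgebra.ι K 0
noncomputable def Yg : FreeAlgebra K (Fin 2) := FreeAlgebra.ι K 1
noncomputable def zz : FreeAlgebra K (Fin 2) := Xg K * Yg K - Yg K * Xg K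

def N (k : ℕ) : Submodule K (FreeAlgebra K (Fin 2)) :=
  Submodule.span K {v | ∃ c : FreeAlgebra K (Fin 2),
    ∃ l ∈ lowerCentral K (FreeAlgebra K (Fin 2)) k, v = c * l}

def ZS : Submodule K (FreeAlgebra K (Fin 2)) :=
  Submodule.span K {v | ∃ e f : FreeAlgebra K (Fin 2), v = e * zz K * f}

def SP (k : ℕ) : Submodule K (FreeAlgebra K (Fin 2)) :=
  Submodule.span K {v | ∃ (e f : FreeAlgebra K (Fin 2)) (g : Fin 2)
    (l : FreeAlgebra K (Fin 2)), l ∈ lowerCentral K (FreeAlgebra K (Fin 2)) k ∧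
    v = e * (FreeAlgebra.ι K g * l - l * FreeAlgebra.ι K g) * f}

noncomputable def mw (c : List (Fin 2)) : FreeAlgebra K (Fin 2) :=
  (c.map (FreeAlgebra.ι K)).prod

/-- iterated ad-words on z -/
def adw : ℕ → Set (FreeAlgebra K (Fin 2))
  | 0 => {zz K}
  | n + 1 => {v | ∃ (g : Fin 2), ∃ w ∈ adw n,
      v = FreeAlgebra.ι K g * w - w * FreeAlgebra.ι K g}

variable {K}

lemma lc_succ_succ (n : ℕ) :
    lowerCentral K A (n+2) = Submodule.span K
      {x | ∃ a : FreeAlgebra K (Fin 2), ∃ l ∈ lowerCentral K A (n+1), x = a * l - l * a} := rfl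

lemma mem_lc_succ {k : ℕ} {l : FreeAlgebra K (Fin 2)} (hl : l ∈ lowerCentral K A k)
    (a : FreeAlgebra K (Fin 2)) : a * l - l * a ∈ lowerCentral K A (k+1) := by
  cases k with
  | zero => exact Submodule.mem_top
  | succ m => exact Submodule.subset_span ⟨a, l, hl, rfl⟩

lemma lc_mono {k : ℕ} : lowerCentral K A (k+1) ≤ lowerCentral K A k := by
  induction k with
  | zero => exact le_top
  | succ m ih =>
    cases m with
    | zero => exact le_top
    | succ m' =>
      rw [lc_succ_succ]
      refine Submodule.span_le.mpr ?_
      rintro x ⟨a, l, hl, rfl⟩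
      exact Submodule.subset_span ⟨a, l, ih hl, rfl⟩

lemma mem_N {k : ℕ} (c : FreeAlgebra K (Fin 2)) {l : FreeAlgebra K (Fin 2)}
    (hl : l ∈ lowerCentral K A k) : c * l ∈ N K k :=
  Submodule.subset_span ⟨c, l, hl, rfl⟩

lemma lc_le_N {k : ℕ} {l : FreeAlgebra K (Fin 2)} (hl : l ∈ lowerCentral K A k) :
    l ∈ N K k := by
  simpa using mem_N (1 : FreeAlgebra K (Fin 2)) hl

lemma N_mul_left {k : ℕ} (a : FreeAlgebra K (Fin 2)) {v : FreeAlgebra K (Fin 2)}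
    (hv : v ∈ N K k) : a * v ∈ N K k := by
  induction hv using Submodule.span_induction with
  | mem x hx =>
    obtain ⟨c, l, hl, rfl⟩ := hx
    rw [← mul_assoc]
    exact mem_N _ hl
  | zero => simp
  | add x y _ _ hx hy => rw [mul_add]; exact add_mem hx hy
  | smul r x _ hx => rw [mul_smul_comm]; exact Submodule.smul_mem _ r hx

lemma N_mul_right {k : ℕ} (b : FreeAlgebra K (Fin 2)) {v : FreeAlgebra K (Fin 2)}
    (hv : v ∈ N K k) : v * b ∈ N K k := by
  induction hv using Submodule.span_induction with
  | mem x hx =>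
    obtain ⟨c, l, hl, rfl⟩ := hx
    have h1 : c * l * b = (c * b) * l - c * (b * l - l * b) := by noncomm_ring
    rw [h1]
    exact sub_mem (mem_N _ hl) (mem_N _ (lc_mono (mem_lc_succ hl b)))
  | zero => simp
  | add x y _ _ hx hy => rw [add_mul]; exact add_mem hx hy
  | smul r x _ hx => rw [smul_mul_assoc]; exact Submodule.smul_mem _ r hx

lemma N_mono {k : ℕ} : N K (k+1) ≤ N K k := by
  refine Submodule.span_le.mpr ?_
  rintro x ⟨c, l, hl, rfl⟩
  exact mem_N c (lc_mono hl)

lemma lcsIdeal_le_N (k : ℕ) : lcsIdeal K (FreeAlgebra K (Fin 2)) k ≤ N K k := by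
  refine Submodule.span_le.mpr ?_
  rintro x ⟨a, b, l, hl, rfl⟩
  exact N_mul_right b (mem_N a hl)

lemma N_le_lcsIdeal (k : ℕ) : N K k ≤ lcsIdeal K (FreeAlgebra K (Fin 2)) k := by
  refine Submodule.span_le.mpr ?_
  rintro x ⟨c, l, hl, rfl⟩
  exact Submodule.subset_span ⟨c, 1, l, hl, by rw [mul_one]⟩

lemma ZS_mul_left (a : FreeAlgebra K (Fin 2)) {v} (hv : v ∈ ZS K) : a * v ∈ ZS K := by
  induction hv using Submodule.span_induction with
  | mem x hx => obtain ⟨e, f, rfl⟩ := hx; exact Submodule.subset_span ⟨a*e, f, by noncomm_ring⟩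
  | zero => simp
  | add x y _ _ hx hy => rw [mul_add]; exact add_mem hx hy
  | smul r x _ hx => rw [mul_smul_comm]; exact Submodule.smul_mem _ r hx

lemma ZS_mul_right (b : FreeAlgebra K (Fin 2)) {v} (hv : v ∈ ZS K) : v * b ∈ ZS K := by
  induction hv using Submodule.span_induction with
  | mem x hx => obtain ⟨e, f, rfl⟩ := hx; exact Submodule.subset_span ⟨e, f*b, by noncomm_ring⟩
  | zero => simp
  | add x y _ _ hx hy => rw [add_mul]; exact add_mem hx hy
  | smul r x _ hx => rw [smul_mul_assoc]; exact Submodule.smul_mem _ r hx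

lemma comm_ι_ι (g g' : Fin 2) :
    FreeAlgebra.ι K g * FreeAlgebra.ι K g' - FreeAlgebra.ι K g' * FreeAlgebra.ι K g ∈ ZS K := by
  fin_cases g <;> fin_cases g'
  · simp
  · show FreeAlgebra.ι K (0:Fin 2) * FreeAlgebra.ι K (1:Fin 2) -
        FreeAlgebra.ι K (1:Fin 2) * FreeAlgebra.ι K (0:Fin 2) ∈ ZS K
    exact Submodule.subset_span ⟨1, 1, by simp only [zz, Xg, Yg, one_mul, mul_one]⟩
  · show FreeAlgebra.ι K (1:Fin 2) * FreeAlgebra.ι K (0:Fin 2) -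
        FreeAlgebra.ι K (0:Fin 2) * FreeAlgebra.ι K (1:Fin 2) ∈ ZS K
    have h : FreeAlgebra.ι K (1:Fin 2) * FreeAlgebra.ι K (0:Fin 2) -
        FreeAlgebra.ι K (0:Fin 2) * FreeAlgebra.ι K (1:Fin 2) = -(1 * zz K * 1) := by
      simp only [zz, Xg, Yg, one_mul, mul_one]; noncomm_ring
    rw [h]
    exact neg_mem (Submodule.subset_span ⟨1, 1, rfl⟩)
  · simp

lemma comm_mem_ZS (a c : FreeAlgebra K (Fin 2)) : a * c - c * a ∈ ZS K := by
  induction a with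
  | grade0 r => simp [Algebra.commutes]
  | grade1 g =>
    induction c with
    | grade0 r => simp [Algebra.commutes]
    | grade1 g' => exact comm_ι_ι g g'
    | mul u v hu hv =>
      have h : FreeAlgebra.ι K g * (u*v) - (u*v) * FreeAlgebra.ι K g =
          u * (FreeAlgebra.ι K g * v - v * FreeAlgebra.ι K g) +
          (FreeAlgebra.ι K g * u - u * FreeAlgebra.ι K g) * v := by noncomm_ring
      rw [h]
      exact add_mem (ZS_mul_left u hv) (ZS_mul_right v hu)
    | add u v hu hv =>
      have h : FreeAlgebra.ι K g * (u+v) - (u+v) * FreeAlgebra.ι K g =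
          (FreeAlgebra.ι K g * u - u * FreeAlgebra.ι K g) +
          (FreeAlgebra.ι K g * v - v * FreeAlgebra.ι K g) := by noncomm_ring
      rw [h]; exact add_mem hu hv
  | mul u v hu hv =>
    have h : (u*v) * c - c * (u*v) = u * (v * c - c * v) + (u * c - c * u) * v := by noncomm_ring
    rw [h]
    exact add_mem (ZS_mul_left u hv) (ZS_mul_right v hu)
  | add u v hu hv =>
    have h : (u+v) * c - c * (u+v) = (u * c - c * u) + (v * c - c * v) := by noncomm_ring
    rw [h]; exact add_mem hu hv

lemma SP_mul_left {k} (a : FreeAlgebra K (Fin 2)) {v} (hv : v ∈ SP K k) : a * v ∈ SP K k := by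
  induction hv using Submodule.span_induction with
  | mem x hx =>
    obtain ⟨e, f, g, l, hl, rfl⟩ := hx
    exact Submodule.subset_span ⟨a*e, f, g, l, hl, by noncomm_ring⟩
  | zero => simp
  | add x y _ _ hx hy => rw [mul_add]; exact add_mem hx hy
  | smul r x _ hx => rw [mul_smul_comm]; exact Submodule.smul_mem _ r hx

lemma SP_mul_right {k} (b : FreeAlgebra K (Fin 2)) {v} (hv : v ∈ SP K k) : v * b ∈ SP K k := by
  induction hv using Submodule.span_induction with
  | mem x hx =>
    obtain ⟨e, f, g, l, hl, rfl⟩ := hx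
    exact Submodule.subset_span ⟨e, f*b, g, l, hl, by noncomm_ring⟩
  | zero => simp
  | add x y _ _ hx hy => rw [add_mul]; exact add_mem hx hy
  | smul r x _ hx => rw [smul_mul_assoc]; exact Submodule.smul_mem _ r hx

lemma Lred (k : ℕ) : lowerCentral K A (k+2) ≤ SP K (k+1) := by
  refine Submodule.span_le.mpr ?_
  rintro x ⟨a, l, hl, rfl⟩
  induction a with
  | grade0 r => simp [Algebra.commutes]
  | grade1 g => exact Submodule.subset_span ⟨1, 1, g, l, hl, by noncomm_ring⟩
  | mul u v hu hv =>
    have h : (u*v) * l - l * (u*v) = u * (v * l - l * v) + (u * l - l * u) * v := by noncomm_ring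
    rw [h]
    exact add_mem (SP_mul_left u hv) (SP_mul_right v hu)
  | add u v hu hv =>
    have h : (u+v) * l - l * (u+v) = (u * l - l * u) + (v * l - l * v) := by noncomm_ring
    rw [h]; exact add_mem hu hv

lemma mw_nil : mw K ([] : List (Fin 2)) = 1 := rfl

lemma mw_cons (g : Fin 2) (c : List (Fin 2)) : mw K (g :: c) = FreeAlgebra.ι K g * mw K c := by
  simp [mw]

lemma mem_span_mw (v : FreeAlgebra K (Fin 2)) : v ∈ Submodule.span K (Set.range (mw K)) := by
  have hmul : ∀ u w : FreeAlgebra K (Fin 2), u ∈ Submodule.span K (Set.range (mw K)) →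
      w ∈ Submodule.span K (Set.range (mw K)) → u * w ∈ Submodule.span K (Set.range (mw K)) := by
    intro u w hu hw
    induction hu using Submodule.span_induction with
    | mem x hx =>
      obtain ⟨c, rfl⟩ := hx
      induction hw using Submodule.span_induction with
      | mem y hy =>
        obtain ⟨c', rfl⟩ := hy
        refine Submodule.subset_span ⟨c ++ c', ?_⟩
        simp [mw, List.prod_append]
      | zero => simp
      | add y z _ _ hy hz => rw [mul_add]; exact add_mem hy hz
      | smul r y _ hy => rw [mul_smul_comm]; exact Submodule.smul_mem _ r hy
    | zero => simp
    | add x y _ _ hx hy => rw [add_mul]; exact add_mem hx hy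
    | smul r x _ hx => rw [smul_mul_assoc]; exact Submodule.smul_mem _ r hx
  induction v with
  | grade0 r =>
    have h : algebraMap K (FreeAlgebra K (Fin 2)) r = r • mw K [] := by
      simp [mw_nil, Algebra.algebraMap_eq_smul_one]
    rw [h]
    exact Submodule.smul_mem _ r (Submodule.subset_span ⟨[], rfl⟩)
  | grade1 g =>
    have h : FreeAlgebra.ι K g = mw K [g] := by simp [mw]
    rw [h]; exact Submodule.subset_span ⟨[g], rfl⟩
  | mul u w hu hw => exact hmul u w hu hw
  | add u w hu hw => exact add_mem hu hw


lemma core2 {k : ℕ} (g : Fin 2) {l : FreeAlgebra K (Fin 2)} (hl : l ∈ lowerCentral K A k) :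
    zz K * (FreeAlgebra.ι K g * l - l * FreeAlgebra.ι K g) ∈ N K (k+2) := by
  have hX : (Xg K : FreeAlgebra K (Fin 2)) = FreeAlgebra.ι K 0 := rfl
  have hY : (Yg K : FreeAlgebra K (Fin 2)) = FreeAlgebra.ι K 1 := rfl
  fin_cases g
  · -- g = 0 = x
    show zz K * (Xg K * l - l * Xg K) ∈ N K (k+2)
    have h1 : zz K * (Xg K * l - l * Xg K) =
        (Xg K * ((Yg K * Xg K) * l - l * (Yg K * Xg K)) -
          ((Yg K * Xg K) * l - l * (Yg K * Xg K)) * Xg K)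
        - (Xg K * (Yg K * l - l * Yg K) - (Yg K * l - l * Yg K) * Xg K) * Xg K
        - Yg K * (Xg K * (Xg K * l - l * Xg K) - (Xg K * l - l * Xg K) * Xg K) := by
      simp only [zz]; noncomm_ring
    rw [h1]
    have m1 : Xg K * ((Yg K * Xg K) * l - l * (Yg K * Xg K)) -
        ((Yg K * Xg K) * l - l * (Yg K * Xg K)) * Xg K ∈ lowerCentral K A (k+2) :=
      mem_lc_succ (mem_lc_succ hl (Yg K * Xg K)) (Xg K)
    have m2 : Xg K * (Yg K * l - l * Yg K) - (Yg K * l - l * Yg K) * Xg K ∈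
        lowerCentral K A (k+2) := mem_lc_succ (mem_lc_succ hl (Yg K)) (Xg K)
    have m3 : Xg K * (Xg K * l - l * Xg K) - (Xg K * l - l * Xg K) * Xg K ∈
        lowerCentral K A (k+2) := mem_lc_succ (mem_lc_succ hl (Xg K)) (Xg K)
    exact sub_mem (sub_mem (lc_le_N m1) (N_mul_right _ (lc_le_N m2))) (N_mul_left _ (lc_le_N m3))
  · -- g = 1 = y
    show zz K * (Yg K * l - l * Yg K) ∈ N K (k+2)
    set t2 : FreeAlgebra K (Fin 2) := Yg K * l - l * Yg K with ht2
    set R : FreeAlgebra K (Fin 2) :=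
      (Xg K * ((Yg K * Yg K) * l - l * (Yg K * Yg K)) -
        ((Yg K * Yg K) * l - l * (Yg K * Yg K)) * Xg K)
      - (Xg K * t2 - t2 * Xg K) * Yg K
      - Yg K * (Xg K * t2 - t2 * Xg K)
      + (zz K * t2 - t2 * zz K) with hR
    have h2 : zz K * t2 + zz K * t2 = R := by
      rw [hR, ht2]; simp only [zz]; noncomm_ring
    have h3 : zz K * t2 = (2⁻¹ : K) • R := by
      have h4 : (2 : K) • (zz K * t2) = R := by rw [two_smul]; exact h2
      rw [← h4, smul_smul]
      norm_num
    rw [h3]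
    have ht2m : t2 ∈ lowerCentral K A (k+1) := mem_lc_succ hl (Yg K)
    have m1 : Xg K * ((Yg K * Yg K) * l - l * (Yg K * Yg K)) -
        ((Yg K * Yg K) * l - l * (Yg K * Yg K)) * Xg K ∈ lowerCentral K A (k+2) :=
      mem_lc_succ (mem_lc_succ hl (Yg K * Yg K)) (Xg K)
    have m2 : Xg K * t2 - t2 * Xg K ∈ lowerCentral K A (k+2) := mem_lc_succ ht2m (Xg K)
    have m4 : zz K * t2 - t2 * zz K ∈ lowerCentral K A (k+2) := mem_lc_succ ht2m (zz K)
    refine Submodule.smul_mem _ _ ?_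
    exact add_mem (sub_mem (sub_mem (lc_le_N m1) (N_mul_right _ (lc_le_N m2)))
      (N_mul_left _ (lc_le_N m2))) (lc_le_N m4)

lemma adjw : ∀ (n : ℕ), ∀ w ∈ adw K n, ∀ (k : ℕ) (g : Fin 2) (l : FreeAlgebra K (Fin 2)),
    l ∈ lowerCentral K A k →
    w * (FreeAlgebra.ι K g * l - l * FreeAlgebra.ι K g) ∈ N K (k+2) := by
  intro n
  induction n with
  | zero =>
    rintro w hw k g l hl
    have hw' : w = zz K := hw
    subst hw'
    exact core2 g hl
  | succ m ih =>
    rintro w ⟨g', w', hw', rfl⟩ k g l hl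
    set t : FreeAlgebra K (Fin 2) := FreeAlgebra.ι K g * l - l * FreeAlgebra.ι K g with htt
    have h1 : (FreeAlgebra.ι K g' * w' - w' * FreeAlgebra.ι K g') * t =
        (FreeAlgebra.ι K g' * (w' * t) - (w' * t) * FreeAlgebra.ι K g')
        - w' * (FreeAlgebra.ι K g' * t - t * FreeAlgebra.ι K g') := by noncomm_ring
    rw [h1]
    have htm : t ∈ lowerCentral K A (k+1) := mem_lc_succ hl _
    have hA : w' * t ∈ N K (k+2) := ih w' hw' k g l hl
    have hB : w' * (FreeAlgebra.ι K g' * t - t * FreeAlgebra.ι K g') ∈ N K (k+3) :=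
      ih w' hw' (k+1) g' t htm
    exact sub_mem (sub_mem (N_mul_left _ hA) (N_mul_right _ hA)) (N_mono hB)

lemma clem : ∀ (c : List (Fin 2)) (n : ℕ), ∀ w ∈ adw K n,
    ∀ (k : ℕ) (g : Fin 2) (l : FreeAlgebra K (Fin 2)), l ∈ lowerCentral K A k →
    w * (mw K c * (FreeAlgebra.ι K g * l - l * FreeAlgebra.ι K g)) ∈ N K (k+2) := by
  intro c
  induction c with
  | nil =>
    intro n w hw k g l hl
    rw [mw_nil, one_mul]
    exact adjw n w hw k g l hl
  | cons g'' c' ih =>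
    intro n w hw k g l hl
    set t : FreeAlgebra K (Fin 2) := FreeAlgebra.ι K g * l - l * FreeAlgebra.ι K g with htt
    rw [mw_cons]
    have h1 : w * (FreeAlgebra.ι K g'' * mw K c' * t) =
        FreeAlgebra.ι K g'' * (w * (mw K c' * t))
        - (FreeAlgebra.ι K g'' * w - w * FreeAlgebra.ι K g'') * (mw K c' * t) := by
      noncomm_ring
    rw [h1]
    have hA : w * (mw K c' * t) ∈ N K (k+2) := ih n w hw k g l hl
    have hwn : FreeAlgebra.ι K g'' * w - w * FreeAlgebra.ι K g'' ∈ adw K (n+1) :=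
      ⟨g'', w, hw, rfl⟩
    have hB : (FreeAlgebra.ι K g'' * w - w * FreeAlgebra.ι K g'') * (mw K c' * t) ∈
        N K (k+2) := ih (n+1) _ hwn k g l hl
    exact sub_mem (N_mul_left _ hA) hB

lemma z_mul_tower {k : ℕ} (u : FreeAlgebra K (Fin 2)) (g : Fin 2)
    {l : FreeAlgebra K (Fin 2)} (hl : l ∈ lowerCentral K A k) :
    zz K * (u * (FreeAlgebra.ι K g * l - l * FreeAlgebra.ι K g)) ∈ N K (k+2) := by
  set t : FreeAlgebra K (Fin 2) := FreeAlgebra.ι K g * l - l * FreeAlgebra.ι K g with htt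
  have hu := mem_span_mw (K := K) u
  induction hu using Submodule.span_induction with
  | mem x hx =>
    obtain ⟨c, rfl⟩ := hx
    exact clem c 0 (zz K) rfl k g l hl
  | zero => simp
  | add x y _ _ hx hy =>
    have h : zz K * ((x + y) * t) = zz K * (x * t) + zz K * (y * t) := by noncomm_ring
    rw [h]; exact add_mem hx hy
  | smul r x _ hx =>
    have h : zz K * ((r • x) * t) = r • (zz K * (x * t)) := by
      rw [smul_mul_assoc, mul_smul_comm]
    rw [h]; exact Submodule.smul_mem _ r hx

lemma zN {k : ℕ} {v : FreeAlgebra K (Fin 2)} (hv : v ∈ N K (k+2)) :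
    zz K * v ∈ N K (k+3) := by
  induction hv using Submodule.span_induction with
  | mem x hx =>
    obtain ⟨c, l'', hl'', rfl⟩ := hx
    have hsp : l'' ∈ SP K (k+1) := Lred k hl''
    have key : ∀ v' ∈ SP K (k+1), zz K * (c * v') ∈ N K (k+3) := by
      intro v' hv'
      induction hv' using Submodule.span_induction with
      | mem x hx =>
        obtain ⟨e, f, g, l, hl, rfl⟩ := hx
        have h1 : zz K * (c * (e * (FreeAlgebra.ι K g * l - l * FreeAlgebra.ι K g) * f)) =
            (zz K * ((c * e) * (FreeAlgebra.ι K g * l - l * FreeAlgebra.ι K g))) * f := by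
          noncomm_ring
        rw [h1]
        exact N_mul_right f (z_mul_tower (c * e) g hl)
      | zero => simp
      | add x y _ _ hx hy =>
        have h : zz K * (c * (x + y)) = zz K * (c * x) + zz K * (c * y) := by noncomm_ring
        rw [h]; exact add_mem hx hy
      | smul r x _ hx =>
        have h : zz K * (c * (r • x)) = r • (zz K * (c * x)) := by
          rw [mul_smul_comm, mul_smul_comm]
        rw [h]; exact Submodule.smul_mem _ r hx
    exact key l'' hsp
  | zero => simp
  | add x y _ _ hx hy => rw [mul_add]; exact add_mem hx hy
  | smul r x _ hx => rw [mul_smul_comm]; exact Submodule.smul_mem _ r hx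

lemma raise (a : FreeAlgebra K (Fin 2)) {k : ℕ} {v : FreeAlgebra K (Fin 2)}
    (hv : v ∈ N K (k+2)) : a * v - v * a ∈ N K (k+3) := by
  induction hv using Submodule.span_induction with
  | mem x hx =>
    obtain ⟨c, l'', hl'', rfl⟩ := hx
    have h1 : a * (c * l'') - (c * l'') * a =
        (a * c - c * a) * l'' + c * (a * l'' - l'' * a) := by noncomm_ring
    rw [h1]
    have hz : a * c - c * a ∈ ZS K := comm_mem_ZS a c
    have key : ∀ v' ∈ ZS K, v' * l'' ∈ N K (k+3) := by
      intro v' hv'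
      induction hv' using Submodule.span_induction with
      | mem x hx =>
        obtain ⟨e, f, rfl⟩ := hx
        have h2 : e * zz K * f * l'' = e * (zz K * (f * l'')) := by noncomm_ring
        rw [h2]
        exact N_mul_left e (zN (mem_N f hl''))
      | zero => simp
      | add x y _ _ hx hy => rw [add_mul]; exact add_mem hx hy
      | smul r x _ hx => rw [smul_mul_assoc]; exact Submodule.smul_mem _ r hx
    exact add_mem (key _ hz) (mem_N c (mem_lc_succ hl'' a))
  | zero => simp
  | add x y _ _ hx hy =>
    have h : a * (x + y) - (x + y) * a = (a * x - x * a) + (a * y - y * a) := by noncomm_ring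
    rw [h]; exact add_mem hx hy
  | smul r x _ hx =>
    have h : a * (r • x) - (r • x) * a = r • (a * x - x * a) := by
      rw [mul_smul_comm, smul_mul_assoc, smul_sub]
    rw [h]; exact Submodule.smul_mem _ r hx

lemma tprod : ∀ (s : ℕ) (l : FreeAlgebra K (Fin 2)), l ∈ lowerCentral K A (s+2) →
    ∀ (t : ℕ) (v : FreeAlgebra K (Fin 2)), v ∈ N K (t+2) → l * v ∈ N K (s+t+3) := by
  intro s
  induction s with
  | zero =>
    intro l hl t v hv
    rw [lc_succ_succ] at hl
    induction hl using Submodule.span_induction with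
    | mem x hx =>
      obtain ⟨a, b, _, rfl⟩ := hx
      have hz : a * b - b * a ∈ ZS K := comm_mem_ZS a b
      have key : ∀ v' ∈ ZS K, v' * v ∈ N K (t+3) := by
        intro v' hv'
        induction hv' using Submodule.span_induction with
        | mem x hx =>
          obtain ⟨e, f, rfl⟩ := hx
          have h2 : e * zz K * f * v = e * (zz K * (f * v)) := by noncomm_ring
          rw [h2]
          exact N_mul_left e (zN (N_mul_left f hv))
        | zero => simp
        | add x y _ _ hx hy => rw [add_mul]; exact add_mem hx hy
        | smul r x _ hx => rw [smul_mul_assoc]; exact Submodule.smul_mem _ r hx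
      have h3 : (0:ℕ) + t + 3 = t + 3 := by omega
      rw [h3]
      exact key _ hz
    | zero => simp
    | add x y _ _ hx hy => rw [add_mul]; exact add_mem hx hy
    | smul r x _ hx => rw [smul_mul_assoc]; exact Submodule.smul_mem _ r hx
  | succ s' ih =>
    intro l hl t v hv
    rw [lc_succ_succ] at hl
    induction hl using Submodule.span_induction with
    | mem x hx =>
      obtain ⟨a, l₀, hl₀, rfl⟩ := hx
      have h1 : (a * l₀ - l₀ * a) * v =
          (a * (l₀ * v) - (l₀ * v) * a) - l₀ * (a * v - v * a) := by noncomm_ring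
      rw [h1]
      have hA : l₀ * v ∈ N K (s'+t+3) := ih l₀ hl₀ t v hv
      have hA2 : a * (l₀ * v) - (l₀ * v) * a ∈ N K (s'+t+4) := by
        have := raise a (k := s'+t+1) (v := l₀ * v) (by
          have h4 : s'+t+1+2 = s'+t+3 := by omega
          rw [h4]; exact hA)
        have h5 : s'+t+1+3 = s'+t+4 := by omega
        rwa [h5] at this
      have hB : a * v - v * a ∈ N K (t+3) := by
        have := raise a (k := t) hv
        exact this
      have hB2 : l₀ * (a * v - v * a) ∈ N K (s'+t+4) := by
        have h6 := ih l₀ hl₀ (t+1) _ (by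
          have h7 : t+1+2 = t+3 := by omega
          rw [h7]; exact hB)
        have h8 : s'+(t+1)+3 = s'+t+4 := by omega
        rwa [h8] at h6
      have h9 : s'+1+t+3 = s'+t+4 := by omega
      rw [h9]
      exact sub_mem hA2 hB2
    | zero => simp
    | add x y _ _ hx hy => rw [add_mul]; exact add_mem hx hy
    | smul r x _ hx => rw [smul_mul_assoc]; exact Submodule.smul_mem _ r hx

lemma N_mul_N {a b : ℕ} {m n : FreeAlgebra K (Fin 2)}
    (hm : m ∈ N K (a+2)) (hn : n ∈ N K (b+2)) : m * n ∈ N K (a+b+3) := by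
  induction hm using Submodule.span_induction with
  | mem x hx =>
    obtain ⟨c, l, hl, rfl⟩ := hx
    rw [mul_assoc]
    exact N_mul_left c (tprod a l hl b n hn)
  | zero => simp
  | add x y _ _ hx hy => rw [add_mul]; exact add_mem hx hy
  | smul r x _ hx => rw [smul_mul_assoc]; exact Submodule.smul_mem _ r hx

end LCS2

/-- Containment for `n = 2`: for all `i, j ≥ 2`,
`M_i(A_2) · M_j(A_2) ⊆ M_{i+j-1}(A_2)`. -/
theorem containment_two_generators
    (K : Type*) [Field K] [CharZero K]
    (i j : ℕ) (hi : 2 ≤ i) (hj : 2 ≤ j) :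
    lcsIdeal K (FreeAlgebra K (Fin 2)) i * lcsIdeal K (FreeAlgebra K (Fin 2)) j ≤
      lcsIdeal K (FreeAlgebra K (Fin 2)) (i + j - 1) := by
  obtain ⟨a, rfl⟩ : ∃ a, i = a + 2 := ⟨i - 2, by omega⟩
  obtain ⟨b, rfl⟩ : ∃ b, j = b + 2 := ⟨j - 2, by omega⟩
  have harith : (a+2) + (b+2) - 1 = a + b + 3 := by omega
  rw [harith]
  refine Submodule.mul_le.mpr ?_
  intro m hm n hn
  exact LCS2.N_le_lcsIdeal _
    (LCS2.N_mul_N (LCS2.lcsIdeal_le_N _ hm) (LCS2.lcsIdeal_le_N _ hn))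
end

section
/- For every integer k ≥ 2, the K-span of all brackets ⁅m, c⁆ with m ∈ M_k(A_2) and c ∈ A_2 is contained in M_{k+1}(A_2), where A_2 is the free associative algebra on two generators over a field of characteristic zero. (That is, [M_k(A_2), L_1(A_2)] ⊆ M_{k+1}(A_2).) -/
section Helpers
variable {K : Type*} [CommRing K] {R : Type*} [Ring R] [Algebra K R]

lemma lc_bracket_mem (i : ℕ) (a l : R) (hl : l ∈ lowerCentral K R i) :
    a * l - l * a ∈ lowerCentral K R (i + 1) := by
  match i with
  | 0 => exact Submodule.mem_top
  | n + 1 => exact Submodule.subset_span ⟨a, l, hl, rfl⟩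

lemma lc_mem_lcsIdeal {i : ℕ} {l : R} (hl : l ∈ lowerCentral K R i) : l ∈ lcsIdeal K R i :=
  Submodule.subset_span ⟨1, 1, l, hl, by simp⟩

lemma lcsIdeal_gen {i : ℕ} (a b l : R) (hl : l ∈ lowerCentral K R i) :
    a * l * b ∈ lcsIdeal K R i :=
  Submodule.subset_span ⟨a, b, l, hl, rfl⟩

lemma lcsIdeal_mul_left {i : ℕ} (r : R) {x : R} (hx : x ∈ lcsIdeal K R i) :
    r * x ∈ lcsIdeal K R i := by
  induction hx using Submodule.span_induction with
  | mem x h =>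
    obtain ⟨a, b, l, hl, rfl⟩ := h
    exact Submodule.subset_span ⟨r * a, b, l, hl, by noncomm_ring⟩
  | zero => simp
  | add x y hx hy px py => rw [mul_add]; exact add_mem px py
  | smul c x hx px => rw [mul_smul_comm]; exact Submodule.smul_mem _ _ px

lemma lcsIdeal_mul_right {i : ℕ} (r : R) {x : R} (hx : x ∈ lcsIdeal K R i) :
    x * r ∈ lcsIdeal K R i := by
  induction hx using Submodule.span_induction with
  | mem x h =>
    obtain ⟨a, b, l, hl, rfl⟩ := h
    exact Submodule.subset_span ⟨a, b * r, l, hl, by noncomm_ring⟩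
  | zero => simp
  | add x y hx hy px py => rw [add_mul]; exact add_mem px py
  | smul c x hx px => rw [smul_mul_assoc]; exact Submodule.smul_mem _ _ px

end Helpers

section Key
variable {K : Type*} [Field K] [CharZero K] {R : Type*} [Ring R] [Algebra K R]

lemma keyR1 (k : ℕ) (m x z : R) (hm : m ∈ lowerCentral K R k) :
    (x * z - z * x) * (x * m - m * x) ∈ lcsIdeal K R (k + 2) := by
  set w : R := x * m - m * x with hw_def
  set p : R := x * z - z * x with hp_def
  set t : R := (x * x) * m - m * (x * x) with ht_def
  have hw : w ∈ lowerCentral K R (k + 1) := lc_bracket_mem k x m hm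
  have ht : t ∈ lowerCentral K R (k + 1) := lc_bracket_mem k (x * x) m hm
  have hA1 : t * z - z * t ∈ lcsIdeal K R (k + 2) := by
    have h := lc_bracket_mem (k + 1) z t ht
    have e : t * z - z * t = -(z * t - t * z) := by abel
    rw [e]
    exact neg_mem (lc_mem_lcsIdeal h)
  have hA2 : x * (w * z - z * w) ∈ lcsIdeal K R (k + 2) := by
    have h := lc_bracket_mem (k + 1) z w hw
    have e : x * (w * z - z * w) = -(x * (z * w - w * z)) := by noncomm_ring
    rw [e]
    exact neg_mem (lcsIdeal_mul_left x (lc_mem_lcsIdeal h))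
  have hA3 : (w * z - z * w) * x ∈ lcsIdeal K R (k + 2) := by
    have h := lc_bracket_mem (k + 1) z w hw
    have e : (w * z - z * w) * x = -((z * w - w * z) * x) := by noncomm_ring
    rw [e]
    exact neg_mem (lcsIdeal_mul_right x (lc_mem_lcsIdeal h))
  have hA4 : w * p - p * w ∈ lcsIdeal K R (k + 2) := by
    have h := lc_bracket_mem (k + 1) p w hw
    have e : w * p - p * w = -(p * w - w * p) := by noncomm_ring
    rw [e]
    exact neg_mem (lc_mem_lcsIdeal h)
  have key : (2 : K) • (p * w) =
      (t * z - z * t) - x * (w * z - z * w) - (w * z - z * w) * x - (w * p - p * w) := by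
    rw [two_smul, hw_def, hp_def, ht_def]
    noncomm_ring
  have h2 : (2 : K) • (p * w) ∈ lcsIdeal K R (k + 2) := by
    rw [key]
    exact sub_mem (sub_mem (sub_mem hA1 hA2) hA3) hA4
  have e : p * w = ((2 : K)⁻¹) • ((2 : K) • (p * w)) := by
    rw [smul_smul, inv_mul_cancel₀ (two_ne_zero), one_smul]
  rw [e]
  exact Submodule.smul_mem _ _ h2

lemma keyR2 (k : ℕ) (m a z c : R) (hm : m ∈ lowerCentral K R k) :
    (a * z - z * a) * (c * m - m * c) + (c * z - z * c) * (a * m - m * a)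
      ∈ lcsIdeal K R (k + 2) := by
  have h := keyR1 k m (a + c) z hm
  have ha := keyR1 k m a z hm
  have hc := keyR1 k m c z hm
  have key : (a * z - z * a) * (c * m - m * c) + (c * z - z * c) * (a * m - m * a) =
      ((a + c) * z - z * (a + c)) * ((a + c) * m - m * (a + c))
      - (a * z - z * a) * (a * m - m * a) - (c * z - z * c) * (c * m - m * c) := by
    noncomm_ring
  rw [key]
  exact sub_mem (sub_mem h ha) hc

end Key

section Free
variable (K : Type*) [Field K] [CharZero K]

local notation "A" => FreeAlgebra K (Fin 2)
local notation "gen" i => FreeAlgebra.ι K (i : Fin 2)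

/-- Structural reduction in the first bracket slot. -/
lemma reduce1 (k : ℕ) (l : A) (hl : l ∈ lowerCentral K A (k + 1)) (z : A)
    (hgen : ∀ i : Fin 2, (FreeAlgebra.ι K i * z - z * FreeAlgebra.ι K i) * l
      ∈ lcsIdeal K A (k + 2)) :
    ∀ a : A, (a * z - z * a) * l ∈ lcsIdeal K A (k + 2) := by
  intro a
  induction a using FreeAlgebra.induction with
  | grade0 r =>
    have e : ((algebraMap K A) r * z - z * (algebraMap K A) r) = 0 := by
      rw [Algebra.commutes]; exact sub_self _
    rw [e, zero_mul]; exact zero_mem _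
  | grade1 i => exact hgen i
  | add a b pa pb =>
    have e : ((a + b) * z - z * (a + b)) * l
        = (a * z - z * a) * l + (b * z - z * b) * l := by noncomm_ring
    rw [e]; exact add_mem pa pb
  | mul a b pa pb =>
    have hδ : b * l - l * b ∈ lowerCentral K A (k + 2) := lc_bracket_mem (k + 1) b l hl
    have e : ((a * b) * z - z * (a * b)) * l
        = a * ((b * z - z * b) * l) + ((a * z - z * a) * l) * b
          + (a * z - z * a) * (b * l - l * b) * 1 := by noncomm_ring
    rw [e]
    exact add_mem (add_mem (lcsIdeal_mul_left a pb) (lcsIdeal_mul_right b pa))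
      (lcsIdeal_gen _ _ _ hδ)

/-- The purely-generator base case, using pigeonhole on `Fin 2`. -/
lemma genBase (k : ℕ) (m : A) (hm : m ∈ lowerCentral K A k) (i j t : Fin 2) :
    (FreeAlgebra.ι K i * FreeAlgebra.ι K j - FreeAlgebra.ι K j * FreeAlgebra.ι K i)
      * (FreeAlgebra.ι K t * m - m * FreeAlgebra.ι K t) ∈ lcsIdeal K A (k + 2) := by
  by_cases hij : i = j
  · subst hij; rw [sub_self, zero_mul]; exact zero_mem _
  · have ht : t = i ∨ t = j := by omega
    rcases ht with rfl | rfl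
    · exact keyR1 k m _ _ hm
    · have h := keyR2 k m (FreeAlgebra.ι K i) (FreeAlgebra.ι K t) (FreeAlgebra.ι K t) hm
      rw [sub_self, zero_mul, add_zero] at h
      exact h
end Free

section Free2
variable (K : Type*) [Field K] [CharZero K]
local notation "A" => FreeAlgebra K (Fin 2)

/-- KEY: `[a,z] * [c,m] ∈ M (k+2)` for all `a z c : A` and `m ∈ L k`. -/
lemma Qlemma (k : ℕ) (m : A) (hm : m ∈ lowerCentral K A k) :
    ∀ a z c : A, (a * z - z * a) * (c * m - m * c) ∈ lcsIdeal K A (k + 2) := by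
  have hlc : ∀ c : A, c * m - m * c ∈ lowerCentral K A (k + 1) :=
    fun c => lc_bracket_mem k c m hm
  -- step 1 : both first slots generators, third arbitrary
  have hstep : ∀ (i j : Fin 2) (c : A),
      (FreeAlgebra.ι K i * FreeAlgebra.ι K j - FreeAlgebra.ι K j * FreeAlgebra.ι K i)
        * (c * m - m * c) ∈ lcsIdeal K A (k + 2) := by
    intro i j c
    have h1 : ∀ a : A, (a * FreeAlgebra.ι K j - FreeAlgebra.ι K j * a)
        * (FreeAlgebra.ι K i * m - m * FreeAlgebra.ι K i) ∈ lcsIdeal K A (k + 2) :=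
      reduce1 K k _ (hlc (FreeAlgebra.ι K i)) (FreeAlgebra.ι K j)
        (fun i' => genBase K k m hm i' j i)
    have h2 := keyR2 k m (FreeAlgebra.ι K i) (FreeAlgebra.ι K j) c hm
    have := sub_mem h2 (h1 c)
    simpa using this
  -- step 2 : first slot generator, others arbitrary
  have hstep2 : ∀ (i : Fin 2) (z c : A),
      (FreeAlgebra.ι K i * z - z * FreeAlgebra.ι K i) * (c * m - m * c)
        ∈ lcsIdeal K A (k + 2) := by
    intro i z c
    have h1 : ∀ a : A, (a * FreeAlgebra.ι K i - FreeAlgebra.ι K i * a) * (c * m - m * c)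
        ∈ lcsIdeal K A (k + 2) :=
      reduce1 K k _ (hlc c) (FreeAlgebra.ι K i) (fun j => hstep j i c)
    have e : (FreeAlgebra.ι K i * z - z * FreeAlgebra.ι K i) * (c * m - m * c)
        = -((z * FreeAlgebra.ι K i - FreeAlgebra.ι K i * z) * (c * m - m * c)) := by
      noncomm_ring
    rw [e]
    exact neg_mem (h1 z)
  intro a z c
  exact reduce1 K k _ (hlc c) z (fun i => hstep2 i z c) a

/-- `[u,v] * l ∈ M (k+1)` for `l ∈ L k`, `k ≥ 2`. -/
lemma comm_mul_L (k : ℕ) (hk : 2 ≤ k) (u v : A) {l : A} (hl : l ∈ lowerCentral K A k) :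
    (u * v - v * u) * l ∈ lcsIdeal K A (k + 1) := by
  obtain ⟨k', rfl⟩ : ∃ k', k = k' + 2 := ⟨k - 2, by omega⟩
  have hl' : l ∈ Submodule.span K
      {x : A | ∃ a : A, ∃ n ∈ lowerCentral K A (k' + 1), x = a * n - n * a} := hl
  clear hl
  induction hl' using Submodule.span_induction with
  | mem x h =>
    obtain ⟨a, n, hn, rfl⟩ := h
    exact Qlemma K (k' + 1) n hn u v a
  | zero => rw [mul_zero]; exact zero_mem _
  | add x y hx hy px py => rw [mul_add]; exact add_mem px py
  | smul c x hx px => rw [mul_smul_comm]; exact Submodule.smul_mem _ _ px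

end Free2

/-- for every `k ≥ 2`, `[M_k(A_2), L_1(A_2)] ⊆ M_{k+1}(A_2)`, i.e. the `K`-span
of all brackets `⁅m, c⁆ = m * c - c * m` with `m ∈ M_k(A_2)` and `c ∈ A_2` is contained
in `M_{k+1}(A_2)`. -/
theorem bracket_with_L1_two_generators
    (K : Type*) [Field K] [CharZero K]
    (k : ℕ) (hk : 2 ≤ k) :
    Submodule.span K {x : FreeAlgebra K (Fin 2) |
        ∃ m ∈ lcsIdeal K (FreeAlgebra K (Fin 2)) k,
          ∃ c : FreeAlgebra K (Fin 2), x = m * c - c * m} ≤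
      lcsIdeal K (FreeAlgebra K (Fin 2)) (k + 1) := by
  rw [Submodule.span_le]
  rintro x ⟨m, hm, c, rfl⟩
  induction hm using Submodule.span_induction with
  | mem x h =>
    obtain ⟨a, b, l, hl, rfl⟩ := h
    have hT1 : a * (l * (b * c - c * b)) ∈ lcsIdeal K (FreeAlgebra K (Fin 2)) (k + 1) := by
      have hdl : (b * c - c * b) * l ∈ lcsIdeal K (FreeAlgebra K (Fin 2)) (k + 1) :=
        comm_mul_L K k hk b c hl
      have hcomm : l * (b * c - c * b) - (b * c - c * b) * l
          ∈ lcsIdeal K (FreeAlgebra K (Fin 2)) (k + 1) := by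
        have h := lc_bracket_mem k (b * c - c * b) l hl
        have e : l * (b * c - c * b) - (b * c - c * b) * l
            = -((b * c - c * b) * l - l * (b * c - c * b)) := by noncomm_ring
        rw [e]
        exact neg_mem (lc_mem_lcsIdeal h)
      have : l * (b * c - c * b)
          = (l * (b * c - c * b) - (b * c - c * b) * l) + (b * c - c * b) * l := by abel
      rw [this] at *
      exact lcsIdeal_mul_left a (add_mem hcomm hdl)
    have hT2 : a * (l * c - c * l) * b ∈ lcsIdeal K (FreeAlgebra K (Fin 2)) (k + 1) := by
      have h := lc_bracket_mem k c l hl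
      have h' : l * c - c * l ∈ lowerCentral K (FreeAlgebra K (Fin 2)) (k + 1) := by
        have e : l * c - c * l = -(c * l - l * c) := by abel
        rw [e]; exact neg_mem h
      exact lcsIdeal_gen a b _ h'
    have hT3 : ((a * c - c * a) * l) * b ∈ lcsIdeal K (FreeAlgebra K (Fin 2)) (k + 1) :=
      lcsIdeal_mul_right b (comm_mul_L K k hk a c hl)
    have e : a * l * b * c - c * (a * l * b)
        = a * (l * (b * c - c * b)) + a * (l * c - c * l) * b + ((a * c - c * a) * l) * b := by
      noncomm_ring
    rw [e]
    exact add_mem (add_mem hT1 hT2) hT3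
  | zero => rw [zero_mul, mul_zero, sub_zero]; exact zero_mem _
  | add x y hx hy px py =>
    have e : (x + y) * c - c * (x + y) = (x * c - c * x) + (y * c - c * y) := by noncomm_ring
    rw [e]; exact add_mem px py
  | smul r x hx px =>
    have e : (r • x) * c - c * (r • x) = r • (x * c - c * x) := by
      rw [smul_mul_assoc, mul_smul_comm, smul_sub]
    rw [e]; exact Submodule.smul_mem _ _ px
end

section
/- Let n ≥ 2 and let i = (i_1, …, i_k) with each i_p ≥ 2. Then the product of ideals M_{i_1}(A_n)···M_{i_k}(A_n) is NOT contained in M_{i_1 + ⋯ + i_k − k + 2}(A_n). (Equivalently, I(A_n, i) ≤ i_1 + ⋯ + i_k − k + 1.) -/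
namespace PBWAux

open MvPolynomial

variable (K : Type*) [Field K] (n : ℕ)

/-- `IsLie e u` : `u` is an iterated commutator of generators with `e + 1` leaves
("defect `e`", i.e. a homogeneous Lie element of degree `e + 1`). -/
inductive IsLie : ℕ → FreeAlgebra K (Fin n) → Prop
  | gen (i : Fin n) : IsLie 0 (FreeAlgebra.ι K i)
  | br {a b : ℕ} {u v : FreeAlgebra K (Fin n)} : IsLie a u → IsLie b v →
      IsLie (a + b + 1) (u * v - v * u)

/-- The decreasing filtration of the free algebra by total "defect" of products of
Lie elements. -/
def Gfil (c : ℕ) : Submodule K (FreeAlgebra K (Fin n)) :=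
  Submodule.span K {x | ∃ L : List (ℕ × FreeAlgebra K (Fin n)),
    (∀ p ∈ L, IsLie K n p.1 p.2) ∧ c ≤ (L.map Prod.fst).sum ∧ x = (L.map Prod.snd).prod}

variable {K n}

theorem Gfil_mono {c c' : ℕ} (h : c ≤ c') : Gfil K n c' ≤ Gfil K n c := by
  apply Submodule.span_mono
  rintro x ⟨L, hL, hs, rfl⟩
  exact ⟨L, hL, le_trans h hs, rfl⟩

theorem prod_mem_Gfil {L : List (ℕ × FreeAlgebra K (Fin n))}
    (hL : ∀ p ∈ L, IsLie K n p.1 p.2) {c : ℕ} (hc : c ≤ (L.map Prod.fst).sum) :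
    (L.map Prod.snd).prod ∈ Gfil K n c :=
  Submodule.subset_span ⟨L, hL, hc, rfl⟩

theorem single_mem_Gfil {e : ℕ} {u : FreeAlgebra K (Fin n)} (hu : IsLie K n e u)
    {c : ℕ} (hc : c ≤ e) : u ∈ Gfil K n c := by
  have := prod_mem_Gfil (L := [(e, u)]) (by simpa using hu) (c := c) (by simpa using hc)
  simpa using this

theorem Gfil_mul {c c' : ℕ} {x y : FreeAlgebra K (Fin n)}
    (hx : x ∈ Gfil K n c) (hy : y ∈ Gfil K n c') : x * y ∈ Gfil K n (c + c') := by
  have h := Submodule.mul_mem_mul hx hy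
  rw [Gfil, Gfil, Submodule.span_mul_span] at h
  refine Submodule.span_le.2 ?_ h
  rintro z ⟨a, ⟨L, hL, hs, rfl⟩, b, ⟨L', hL', hs', rfl⟩, rfl⟩
  refine Submodule.subset_span ⟨L ++ L', ?_, ?_, ?_⟩
  · intro p hp; rcases List.mem_append.1 hp with h | h
    · exact hL p h
    · exact hL' p h
  · rw [List.map_append, List.sum_append]; exact Nat.add_le_add hs hs'
  · rw [List.map_append, List.prod_append]

theorem mem_Gfil_zero (x : FreeAlgebra K (Fin n)) : x ∈ Gfil K n 0 := by
  induction x using FreeAlgebra.induction with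
  | grade0 r =>
      have h1 : (1 : FreeAlgebra K (Fin n)) ∈ Gfil K n 0 :=
        prod_mem_Gfil (L := []) (by simp) (by simp)
      simpa [Algebra.algebraMap_eq_smul_one] using
        Submodule.smul_mem _ r h1
  | grade1 i =>
      exact single_mem_Gfil (IsLie.gen i) le_rfl
  | mul a b ha hb => simpa using Gfil_mul ha hb
  | add a b ha hb => exact Submodule.add_mem _ ha hb

theorem Gfil_zero_eq_top : Gfil K n 0 = ⊤ :=
  top_le_iff.1 fun x _ => mem_Gfil_zero x

/-- commutator of a single Lie element with a product of Lie elements -/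
theorem comm_single_prod {e : ℕ} {u : FreeAlgebra K (Fin n)} (hu : IsLie K n e u)
    (L : List (ℕ × FreeAlgebra K (Fin n))) (hL : ∀ p ∈ L, IsLie K n p.1 p.2) :
    u * (L.map Prod.snd).prod - (L.map Prod.snd).prod * u ∈
      Gfil K n ((L.map Prod.fst).sum + 1) := by
  induction L with
  | nil => simpa using (Gfil K n _).zero_mem
  | cons q L0 ih =>
      obtain ⟨f, v⟩ := q
      have hv : IsLie K n f v := hL (f, v) (by simp)
      have hL0 : ∀ p ∈ L0, IsLie K n p.1 p.2 := fun p hp => hL p (List.mem_cons_of_mem _ hp)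
      set P0 := (L0.map Prod.snd).prod with hP0
      have key : u * (v * P0) - (v * P0) * u
          = v * (u * P0 - P0 * u) + (u * v - v * u) * P0 := by noncomm_ring
      simp only [List.map_cons, List.prod_cons, List.sum_cons]
      rw [key]
      refine Submodule.add_mem _ ?_ ?_
      · have h1 : v ∈ Gfil K n f := single_mem_Gfil hv le_rfl
        have h2 := Gfil_mul h1 (ih hL0)
        exact Gfil_mono (by omega) h2
      · have h1 : (u * v - v * u) ∈ Gfil K n (e + f + 1) :=
          single_mem_Gfil (IsLie.br hu hv) le_rfl
        have h2 : P0 ∈ Gfil K n (L0.map Prod.fst).sum :=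
          prod_mem_Gfil hL0 le_rfl
        exact Gfil_mono (by omega) (Gfil_mul h1 h2)

theorem comm_prod_prod (L' L : List (ℕ × FreeAlgebra K (Fin n)))
    (hL' : ∀ p ∈ L', IsLie K n p.1 p.2) (hL : ∀ p ∈ L, IsLie K n p.1 p.2) :
    (L'.map Prod.snd).prod * (L.map Prod.snd).prod
      - (L.map Prod.snd).prod * (L'.map Prod.snd).prod ∈
      Gfil K n ((L.map Prod.fst).sum + 1) := by
  induction L' with
  | nil => simpa using (Gfil K n _).zero_mem
  | cons q L0 ih =>
      obtain ⟨e, u⟩ := q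
      have hu : IsLie K n e u := hL' (e, u) (by simp)
      have hL0 : ∀ p ∈ L0, IsLie K n p.1 p.2 := fun p hp => hL' p (List.mem_cons_of_mem _ hp)
      set P := (L.map Prod.snd).prod with hP
      set Q := (L0.map Prod.snd).prod with hQ
      have key : (u * Q) * P - P * (u * Q) = u * (Q * P - P * Q) + (u * P - P * u) * Q := by
        noncomm_ring
      simp only [List.map_cons, List.prod_cons, List.sum_cons]
      rw [key]
      refine Submodule.add_mem _ ?_ ?_
      · have h1 : u ∈ Gfil K n 0 := single_mem_Gfil hu (Nat.zero_le _)
        simpa using Gfil_mul h1 (ih hL0)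
      · have h1 := comm_single_prod hu L hL
        have h2 : Q ∈ Gfil K n 0 := prod_mem_Gfil hL0 (Nat.zero_le _)
        simpa using Gfil_mul h1 h2

theorem comm_mem_Gfil (a : FreeAlgebra K (Fin n)) {c : ℕ} {x : FreeAlgebra K (Fin n)}
    (hx : x ∈ Gfil K n c) : a * x - x * a ∈ Gfil K n (c + 1) := by
  induction hx using Submodule.span_induction with
  | mem x hxs =>
      obtain ⟨L, hL, hs, rfl⟩ := hxs
      have ha : a ∈ Gfil K n 0 := mem_Gfil_zero a
      induction ha using Submodule.span_induction with
      | mem a has =>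
          obtain ⟨L', hL', _, rfl⟩ := has
          exact Gfil_mono (by omega) (comm_prod_prod L' L hL' hL)
      | zero => simpa using (Gfil K n _).zero_mem
      | add a b hha hhb iha ihb =>
          have : (a + b) * (L.map Prod.snd).prod - (L.map Prod.snd).prod * (a + b)
            = (a * (L.map Prod.snd).prod - (L.map Prod.snd).prod * a)
              + (b * (L.map Prod.snd).prod - (L.map Prod.snd).prod * b) := by noncomm_ring
          rw [this]; exact Submodule.add_mem _ iha ihb
      | smul r a hha iha =>
          have : (r • a) * (L.map Prod.snd).prod - (L.map Prod.snd).prod * (r • a)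
            = r • (a * (L.map Prod.snd).prod - (L.map Prod.snd).prod * a) := by
            rw [smul_mul_assoc, mul_smul_comm, smul_sub]
          rw [this]; exact Submodule.smul_mem _ _ iha
  | zero => simpa using (Gfil K n _).zero_mem
  | add x y hxm hym ihx ihy =>
      have : a * (x + y) - (x + y) * a = (a * x - x * a) + (a * y - y * a) := by noncomm_ring
      rw [this]; exact Submodule.add_mem _ ihx ihy
  | smul r x hxm ihx =>
      have : a * (r • x) - (r • x) * a = r • (a * x - x * a) := by
        rw [smul_mul_assoc, mul_smul_comm, smul_sub]
      rw [this]; exact Submodule.smul_mem _ _ ihx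

theorem lowerCentral_le_Gfil (j : ℕ) :
    lowerCentral K (FreeAlgebra K (Fin n)) (j + 1) ≤ Gfil K n j := by
  induction j with
  | zero => rw [Gfil_zero_eq_top]; exact le_top
  | succ j ih =>
      show lowerCentral K (FreeAlgebra K (Fin n)) (j + 2) ≤ Gfil K n (j + 1)
      rw [lowerCentral]
      refine Submodule.span_le.2 ?_
      rintro x ⟨a, l, hl, rfl⟩
      exact comm_mem_Gfil a (ih hl)

theorem lcsIdeal_le_Gfil (j : ℕ) :
    lcsIdeal K (FreeAlgebra K (Fin n)) (j + 1) ≤ Gfil K n j := by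
  rw [lcsIdeal]
  refine Submodule.span_le.2 ?_
  rintro x ⟨a, b, l, hl, rfl⟩
  have ha : a ∈ Gfil K n 0 := mem_Gfil_zero a
  have hb : b ∈ Gfil K n 0 := mem_Gfil_zero b
  have hl' : l ∈ Gfil K n j := lowerCentral_le_Gfil j hl
  have := Gfil_mul (Gfil_mul ha hl') hb
  simpa using this

/-! ### The model: operators on a polynomial ring -/

variable (K)

/-- the polynomial ring `K[y, z₂, z₃, …]` with `y = X 0`, `z_j = X (j-1)`. -/
abbrev S := MvPolynomial ℕ K

/-- the shift derivation `δ` with `δ (X j) = X (j+1)`. -/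
noncomputable def Dop : Module.End K (S K) :=
  (MvPolynomial.mkDerivation K fun j => (X (j + 1) : S K)).toLinearMap

/-- multiplication by `X j`. -/
noncomputable def Mop (j : ℕ) : Module.End K (S K) :=
  LinearMap.mulLeft K (X j : S K)

theorem Dop_apply (f : S K) :
    Dop K f = (MvPolynomial.mkDerivation K fun j => (X (j + 1) : S K)) f := rfl

theorem Mop_apply (j : ℕ) (f : S K) : Mop K j f = X j * f := rfl

theorem Dop_mul_X (j : ℕ) (f : S K) : Dop K (X j * f) = X (j + 1) * f + X j * Dop K f := by
  rw [Dop_apply, Derivation.leibniz, MvPolynomial.mkDerivation_X, smul_eq_mul, smul_eq_mul,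
    ← Dop_apply]
  ring

theorem DM_comm (j : ℕ) : Dop K * Mop K j - Mop K j * Dop K = Mop K (j + 1) := by
  refine LinearMap.ext fun f => ?_
  simp only [LinearMap.sub_apply, Module.End.mul_apply, Mop_apply, Dop_mul_X]
  ring

theorem MM_comm (a b : ℕ) : Mop K a * Mop K b = Mop K b * Mop K a := by
  refine LinearMap.ext fun f => ?_
  simp only [Module.End.mul_apply, Mop_apply]
  ring

variable {K}

/-- span of operators available at defect `e` -/
noncomputable def gsub (e : ℕ) : Submodule K (Module.End K (S K)) :=
  Submodule.span K ({Mop K e} ∪ {T | e = 0 ∧ T = Dop K})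

theorem gsub_br {a b : ℕ} {T U : Module.End K (S K)} (hT : T ∈ gsub a) (hU : U ∈ gsub b) :
    T * U - U * T ∈ gsub (a + b + 1) := by
  induction hT using Submodule.span_induction with
  | mem T hTs =>
      induction hU using Submodule.span_induction with
      | mem U hUs =>
          rcases hTs with hTs | ⟨ha, hTs⟩ <;> rcases hUs with hUs | ⟨hb, hUs⟩
          · rcases Set.mem_singleton_iff.1 hTs with rfl
            rcases Set.mem_singleton_iff.1 hUs with rfl
            rw [MM_comm, sub_self]
            exact (gsub _).zero_mem
          · rcases Set.mem_singleton_iff.1 hTs with rfl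
            subst hb; subst hUs
            have : Mop K a * Dop K - Dop K * Mop K a = -(Mop K (a + 1)) := by
              rw [← DM_comm]; noncomm_ring
            rw [this]
            exact Submodule.neg_mem _ (Submodule.subset_span (Or.inl rfl))
          · subst ha; subst hTs
            rcases Set.mem_singleton_iff.1 hUs with rfl
            rw [DM_comm]
            simp only [Nat.zero_add]
            exact Submodule.subset_span (Or.inl rfl)
          · subst ha; subst hTs; subst hb; subst hUs
            rw [sub_self]
            exact (gsub _).zero_mem
      | zero => simpa using (gsub _).zero_mem
      | add U V hU hV ihU ihV =>
          have : T * (U + V) - (U + V) * T = (T * U - U * T) + (T * V - V * T) := by noncomm_ring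
          rw [this]; exact Submodule.add_mem _ ihU ihV
      | smul r U hU ihU =>
          have : T * (r • U) - (r • U) * T = r • (T * U - U * T) := by
            rw [mul_smul_comm, smul_mul_assoc, smul_sub]
          rw [this]; exact Submodule.smul_mem _ _ ihU
  | zero => simpa using (gsub _).zero_mem
  | add T V hT hV ihT ihV =>
      have : (T + V) * U - U * (T + V) = (T * U - U * T) + (V * U - U * V) := by noncomm_ring
      rw [this]; exact Submodule.add_mem _ ihT ihV
  | smul r T hT ihT =>
      have : (r • T) * U - U * (r • T) = r • (T * U - U * T) := by
        rw [mul_smul_comm, smul_mul_assoc, smul_sub]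
      rw [this]; exact Submodule.smul_mem _ _ ihT

variable (K n)

/-- the algebra map from the free algebra to operators -/
noncomputable def ψ : FreeAlgebra K (Fin n) →ₐ[K] Module.End K (S K) :=
  FreeAlgebra.lift K fun v : Fin n =>
    if (v : ℕ) = 0 then Dop K else if (v : ℕ) = 1 then Mop K 0 else 0

variable {K n}

theorem psi_isLie {e : ℕ} {u : FreeAlgebra K (Fin n)} (hu : IsLie K n e u) :
    ψ K n u ∈ gsub e := by
  induction hu with
  | gen i =>
      rw [ψ, FreeAlgebra.lift_ι_apply]
      by_cases h0 : (i : ℕ) = 0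
      · simp only [h0, if_true]
        exact Submodule.subset_span (Or.inr ⟨rfl, rfl⟩)
      · by_cases h1 : (i : ℕ) = 1
        · simp only [h0, h1, if_false, if_true]
          exact Submodule.subset_span (Or.inl rfl)
        · simp only [h0, h1, if_false]
          exact (gsub _).zero_mem
  | br hu hv ihu ihv =>
      rw [map_sub, map_mul, map_mul]
      exact gsub_br ihu ihv

/-! ### weight and degree of exponents -/

/-- weight: variable `X j` counts `j + 1` -/
noncomputable def ωh : (ℕ →₀ ℕ) →+ ℕ :=
  Finsupp.liftAddHom fun j => AddMonoidHom.mulRight (j + 1)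

/-- degree: total number of letters -/
noncomputable def dgh : (ℕ →₀ ℕ) →+ ℕ :=
  Finsupp.liftAddHom fun _ => AddMonoidHom.id ℕ

theorem ωh_single (j m : ℕ) : ωh (Finsupp.single j m) = m * (j + 1) :=
  Finsupp.liftAddHom_apply_single _ _ _

theorem dgh_single (j m : ℕ) : dgh (Finsupp.single j m) = m :=
  Finsupp.liftAddHom_apply_single _ _ _

variable (K)

/-- span of monomials of weight exactly `w` and degree at most `c` -/
noncomputable def Pred (w c : ℕ) : Submodule K (S K) :=
  Submodule.span K {f | ∃ α : ℕ →₀ ℕ, ωh α = w ∧ dgh α ≤ c ∧ f = monomial α (1 : K)}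

variable {K}

theorem Pred_mono {w c c' : ℕ} (h : c ≤ c') : Pred K w c ≤ Pred K w c' := by
  apply Submodule.span_mono
  rintro f ⟨α, h1, h2, rfl⟩
  exact ⟨α, h1, le_trans h2 h, rfl⟩

theorem monomial_mem_Pred {α : ℕ →₀ ℕ} {w c : ℕ} (h1 : ωh α = w) (h2 : dgh α ≤ c) :
    (monomial α (1 : K) : S K) ∈ Pred K w c :=
  Submodule.subset_span ⟨α, h1, h2, rfl⟩

theorem X_mul_monomial' (j : ℕ) (α : ℕ →₀ ℕ) :
    (X j : S K) * monomial α 1 = monomial (Finsupp.single j 1 + α) 1 := by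
  rw [X, monomial_mul, one_mul]

theorem X_mul_Pred {j w c : ℕ} {f : S K} (hf : f ∈ Pred K w c) :
    (X j : S K) * f ∈ Pred K (w + (j + 1)) (c + 1) := by
  induction hf using Submodule.span_induction with
  | mem f hfs =>
      obtain ⟨α, h1, h2, rfl⟩ := hfs
      rw [X_mul_monomial']
      refine monomial_mem_Pred ?_ ?_
      · rw [map_add, ωh_single, h1]; ring
      · rw [map_add, dgh_single]; omega
  | zero => rw [mul_zero]; exact Submodule.zero_mem _
  | add x y hx hy ihx ihy => rw [mul_add]; exact Submodule.add_mem _ ihx ihy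
  | smul r x hx ihx => rw [mul_smul_comm]; exact Submodule.smul_mem _ _ ihx

theorem dgh_eq_zero {α : ℕ →₀ ℕ} (h : dgh α = 0) : α = 0 := by
  by_contra h0
  obtain ⟨j, hj⟩ : ∃ j, α j ≠ 0 := by
    by_contra hc
    push_neg at hc
    exact h0 (Finsupp.ext fun j => hc j)
  have hjs : j ∈ α.support := Finsupp.mem_support_iff.2 hj
  have hle : α j ≤ dgh α := by
    have : dgh α = α.sum fun _ m => m := by
      rw [dgh, Finsupp.liftAddHom_apply]
      rfl
    rw [this, Finsupp.sum]
    exact Finset.single_le_sum (f := fun l => α l) (fun _ _ => Nat.zero_le _) hjs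
  omega

theorem Dop_monomial (N : ℕ) : ∀ α : ℕ →₀ ℕ, dgh α ≤ N →
    Dop K (monomial α (1 : K)) ∈ Pred K (ωh α + 1) (dgh α) := by
  induction N with
  | zero =>
      intro α hα
      have h0 : α = 0 := dgh_eq_zero (Nat.le_zero.1 hα)
      subst h0
      rw [monomial_zero', C_1, Dop_apply, Derivation.map_one_eq_zero]
      exact (Pred K _ _).zero_mem
  | succ N ih =>
      intro α hα
      by_cases h0 : α = 0
      · subst h0
        rw [monomial_zero', C_1, Dop_apply, Derivation.map_one_eq_zero]
        exact (Pred K _ _).zero_mem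
      · obtain ⟨j, hj⟩ : ∃ j, α j ≠ 0 := by
          by_contra h
          push_neg at h
          exact h0 (Finsupp.ext fun j => h j)
        set β : ℕ →₀ ℕ := α - Finsupp.single j 1 with hβ
        have hαβ : α = Finsupp.single j 1 + β := by
          ext l
          by_cases hl : j = l
          · subst hl
            simp only [hβ, Finsupp.add_apply, Finsupp.tsub_apply, Finsupp.single_eq_same]
            omega
          · simp [hβ, Finsupp.single_apply, hl]
        have hdg : dgh α = 1 + dgh β := by rw [hαβ, map_add, dgh_single]
        have hω : ωh α = (j + 1) + ωh β := by rw [hαβ, map_add, ωh_single]; ring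
        have hmon : (monomial α (1 : K) : S K) = X j * monomial β 1 := by
          rw [X_mul_monomial', hαβ]
        rw [hmon, Dop_mul_X]
        refine Submodule.add_mem _ ?_ ?_
        · rw [X_mul_monomial']
          refine monomial_mem_Pred ?_ ?_
          · rw [map_add, ωh_single]; omega
          · rw [map_add, dgh_single]; omega
        · have hβN : dgh β ≤ N := by omega
          have := X_mul_Pred (j := j) (ih β hβN)
          have harith : Pred K (ωh β + 1 + (j + 1)) (dgh β + 1) = Pred K (ωh α + 1) (dgh α) := by
            rw [hω, hdg]; ring_nf
          rwa [harith] at this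

theorem Dop_Pred {w c : ℕ} {f : S K} (hf : f ∈ Pred K w c) :
    Dop K f ∈ Pred K (w + 1) c := by
  induction hf using Submodule.span_induction with
  | mem f hfs =>
      obtain ⟨α, h1, h2, rfl⟩ := hfs
      have := Dop_monomial (K := K) (dgh α) α le_rfl
      rw [h1] at this
      exact Pred_mono h2 this
  | zero => rw [map_zero]; exact Submodule.zero_mem _
  | add x y hx hy ihx ihy => rw [map_add]; exact Submodule.add_mem _ ihx ihy
  | smul r x hx ihx => rw [map_smul]; exact Submodule.smul_mem _ _ ihx

theorem gsub_apply_Pred {e : ℕ} {T : Module.End K (S K)} (hT : T ∈ gsub e)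
    {w c : ℕ} {f : S K} (hf : f ∈ Pred K w c) : T f ∈ Pred K (w + (e + 1)) (c + 1) := by
  induction hT using Submodule.span_induction with
  | mem T hTs =>
      rcases hTs with hTs | ⟨he, hTs⟩
      · rcases Set.mem_singleton_iff.1 hTs with rfl
        rw [Mop_apply]
        exact X_mul_Pred hf
      · subst he; subst hTs
        exact Pred_mono (Nat.le_succ c) (Dop_Pred hf)
  | zero => rw [LinearMap.zero_apply]; exact Submodule.zero_mem _
  | add T U hT hU ihT ihU =>
      rw [LinearMap.add_apply]; exact Submodule.add_mem _ ihT ihU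
  | smul r T hT ihT =>
      rw [LinearMap.smul_apply]; exact Submodule.smul_mem _ _ ihT

theorem one_mem_Pred : (1 : S K) ∈ Pred K 0 0 := by
  have : (1 : S K) = monomial 0 1 := by rw [monomial_zero', C_1]
  rw [this]
  exact monomial_mem_Pred (by simp) (by simp)

theorem psi_prod_apply_one (L : List (ℕ × FreeAlgebra K (Fin n)))
    (hL : ∀ p ∈ L, IsLie K n p.1 p.2) :
    (ψ K n (L.map Prod.snd).prod) 1 ∈
      Pred K ((L.map Prod.fst).sum + L.length) L.length := by
  induction L with
  | nil =>
      simp only [List.map_nil, List.prod_nil, map_one, List.sum_nil, List.length_nil]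
      exact one_mem_Pred
  | cons q L0 ih =>
      obtain ⟨e, u⟩ := q
      have hu : IsLie K n e u := hL (e, u) (by simp)
      have hL0 : ∀ p ∈ L0, IsLie K n p.1 p.2 := fun p hp => hL p (List.mem_cons_of_mem _ hp)
      simp only [List.map_cons, List.prod_cons]
      rw [map_mul, Module.End.mul_apply]
      have h1 := gsub_apply_Pred (psi_isLie hu) (ih hL0)
      have harith : Pred K ((L0.map Prod.fst).sum + L0.length + (e + 1)) (L0.length + 1)
          = Pred K ((((e, u) :: L0).map Prod.fst).sum + ((e, u) :: L0).length)
              ((e, u) :: L0).length := by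
        rw [List.map_cons, List.sum_cons, List.length_cons]
        ring_nf
      rwa [harith] at h1

theorem coeff_vanish {w c : ℕ} {μ : ℕ →₀ ℕ} (hμ : ωh μ ≠ w ∨ c < dgh μ)
    {f : S K} (hf : f ∈ Pred K w c) : coeff μ f = 0 := by
  induction hf using Submodule.span_induction with
  | mem f hfs =>
      obtain ⟨α, h1, h2, rfl⟩ := hfs
      rw [coeff_monomial]
      split
      · next h => subst h; rcases hμ with h | h <;> omega
      · rfl
  | zero => simp
  | add x y hx hy ihx ihy => rw [coeff_add, ihx, ihy, add_zero]
  | smul r x hx ihx => rw [coeff_smul, ihx, smul_zero]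

/-! ### the witness element -/

variable (K)

/-- the iterated commutator `ad_{x₀}^j (x₁)` -/
noncomputable def wEl (h0 : 0 < n) (h1 : 1 < n) : ℕ → FreeAlgebra K (Fin n)
  | 0 => FreeAlgebra.ι K ⟨1, h1⟩
  | j + 1 => FreeAlgebra.ι K ⟨0, h0⟩ * wEl h0 h1 j - wEl h0 h1 j * FreeAlgebra.ι K ⟨0, h0⟩

variable {K}

theorem wEl_mem_lowerCentral (h0 : 0 < n) (h1 : 1 < n) (j : ℕ) :
    wEl K h0 h1 j ∈ lowerCentral K (FreeAlgebra K (Fin n)) (j + 1) := by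
  induction j with
  | zero => rw [lowerCentral]; trivial
  | succ j ih =>
      show _ ∈ lowerCentral K (FreeAlgebra K (Fin n)) (j + 2)
      rw [lowerCentral]
      exact Submodule.subset_span ⟨FreeAlgebra.ι K ⟨0, h0⟩, wEl K h0 h1 j, ih, rfl⟩

theorem wEl_mem_lcsIdeal (h0 : 0 < n) (h1 : 1 < n) (j : ℕ) :
    wEl K h0 h1 j ∈ lcsIdeal K (FreeAlgebra K (Fin n)) (j + 1) := by
  rw [lcsIdeal]
  exact Submodule.subset_span ⟨1, 1, wEl K h0 h1 j, wEl_mem_lowerCentral h0 h1 j,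
    by rw [one_mul, mul_one]⟩

theorem psi_wEl (h0 : 0 < n) (h1 : 1 < n) (j : ℕ) : ψ K n (wEl K h0 h1 j) = Mop K j := by
  induction j with
  | zero =>
      rw [wEl, ψ, FreeAlgebra.lift_ι_apply]
      norm_num
  | succ j ih =>
      rw [wEl, map_sub, map_mul, map_mul, ih]
      have hx0 : ψ K n (FreeAlgebra.ι K ⟨0, h0⟩) = Dop K := by
        rw [ψ, FreeAlgebra.lift_ι_apply]; norm_num
      rw [hx0, DM_comm]

theorem isLie_wEl (h0 : 0 < n) (h1 : 1 < n) (j : ℕ) : IsLie K n j (wEl K h0 h1 j) := by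
  induction j with
  | zero => exact IsLie.gen _
  | succ j ih =>
      have := IsLie.br (IsLie.gen (K := K) (n := n) ⟨0, h0⟩) ih
      simpa [wEl] using this

theorem list_prod_mem_prod {k : ℕ} {R : Type*} [Ring R] {Kk : Type*} [Field Kk] [Algebra Kk R]
    (N : Fin k → Submodule Kk R) (x : Fin k → R) (h : ∀ p, x p ∈ N p) :
    (List.ofFn x).prod ∈ (List.ofFn N).prod := by
  induction k with
  | zero =>
      simp only [List.ofFn_zero, List.prod_nil]
      exact Submodule.one_le.1 le_rfl
  | succ k ih =>
      rw [List.ofFn_succ, List.ofFn_succ, List.prod_cons, List.prod_cons]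
      exact Submodule.mul_mem_mul (h 0) (ih _ _ fun p => h p.succ)

theorem Mop_list_prod_apply_one (l : List ℕ) :
    ((l.map (Mop K)).prod : Module.End K (S K)) 1
      = monomial ((l.map fun j => Finsupp.single j 1).sum) (1 : K) := by
  induction l with
  | nil => simp [monomial_zero', Module.End.one_apply]
  | cons j l0 ih =>
      rw [List.map_cons, List.prod_cons, Module.End.mul_apply, ih, Mop_apply,
        X_mul_monomial', List.map_cons, List.sum_cons]

end PBWAux

open PBWAux in
/-- the PBW argument, upper bound: for `n ≥ 2` and a `k`-tuple
`i = (i_1, …, i_k)` with each `i_p ≥ 2`, the product `M_{i_1}(A_n) ⋯ M_{i_k}(A_n)` is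
not contained in `M_{i_1 + ⋯ + i_k - k + 2}(A_n)`; that is,
`I(A_n, i) ≤ i_1 + ⋯ + i_k - k + 1`. -/
theorem pbw_upper_bound
    (K : Type*) [Field K] [CharZero K]
    (n : ℕ) (hn : 2 ≤ n) (k : ℕ) (hk : 1 ≤ k) (i : Fin k → ℕ) (hi : ∀ p, 2 ≤ i p) :
    ¬ (List.ofFn fun p => lcsIdeal K (FreeAlgebra K (Fin n)) (i p)).prod ≤
        lcsIdeal K (FreeAlgebra K (Fin n)) ((∑ p, i p) - k + 2) := by
  intro hcontain
  have h0 : 0 < n := by omega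
  have h1 : 1 < n := by omega
  set Dtot := ∑ p, i p with hDtot
  have hDk : 2 * k ≤ Dtot := by
    rw [hDtot]
    calc 2 * k = ∑ _p : Fin k, 2 := by simp [Finset.sum_const, mul_comm]
    _ ≤ ∑ p, i p := Finset.sum_le_sum fun p _ => hi p
  -- the witness element
  set W : FreeAlgebra K (Fin n) := (List.ofFn fun p => wEl K h0 h1 (i p - 1)).prod with hW
  -- W is in the product of the ideals
  have hWprod : W ∈ (List.ofFn fun p => lcsIdeal K (FreeAlgebra K (Fin n)) (i p)).prod := by
    apply list_prod_mem_prod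
    intro p
    have := wEl_mem_lcsIdeal (K := K) h0 h1 (i p - 1)
    have hip : i p - 1 + 1 = i p := by have := hi p; omega
    rwa [hip] at this
  have hWM : W ∈ lcsIdeal K (FreeAlgebra K (Fin n)) (Dtot - k + 2) := hcontain hWprod
  have hWG : W ∈ Gfil K n (Dtot - k + 1) := by
    have : Dtot - k + 2 = (Dtot - k + 1) + 1 := by omega
    rw [this] at hWM
    exact lcsIdeal_le_Gfil _ hWM
  -- the exponent of the distinguishing monomial
  set μ : ℕ →₀ ℕ := ∑ p : Fin k, Finsupp.single (i p - 1) 1 with hμ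
  have hωμ : ωh μ = Dtot := by
    rw [hμ, map_sum, hDtot]
    refine Finset.sum_congr rfl fun p _ => ?_
    rw [ωh_single]
    have := hi p; omega
  have hdgμ : dgh μ = k := by
    rw [hμ, map_sum]
    simp [dgh_single]
  -- coefficient of μ in (ψ x) 1 vanishes for any x ∈ Gfil
  have hvanish0 : ∀ x ∈ Gfil K n (Dtot - k + 1), MvPolynomial.coeff μ ((ψ K n x) 1) = 0 := by
    intro x hx
    induction hx using Submodule.span_induction with
    | mem x hxs =>
        obtain ⟨L, hL, hs, rfl⟩ := hxs
        have hP := psi_prod_apply_one L hL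
        refine coeff_vanish ?_ hP
        by_contra hcon
        push_neg at hcon
        obtain ⟨he, hle⟩ := hcon
        rw [hωμ] at he
        rw [hdgμ] at hle
        -- Dtot = sum + length, k ≤ length, sum ≥ Dtot - k + 1
        omega
    | zero => simp
    | add x y hx hy ihx ihy => rw [map_add, LinearMap.add_apply, MvPolynomial.coeff_add, ihx, ihy, add_zero]
    | smul r x hx ihx => rw [map_smul, LinearMap.smul_apply, MvPolynomial.coeff_smul, ihx, smul_zero]
  have hvanish : MvPolynomial.coeff μ ((ψ K n W) 1) = 0 := hvanish0 W hWG
  -- but the coefficient is 1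
  have hone : MvPolynomial.coeff μ ((ψ K n W) 1) = 1 := by
    have hmap : ψ K n W = ((List.ofFn fun p => (i p - 1)).map (Mop K)).prod := by
      rw [hW, map_list_prod, List.map_ofFn, List.map_ofFn]
      have hfun : (⇑(ψ K n) ∘ fun p => wEl K h0 h1 (i p - 1))
          = (Mop K ∘ fun p : Fin k => i p - 1) := funext fun p => psi_wEl h0 h1 (i p - 1)
      rw [hfun]
    rw [hmap, Mop_list_prod_apply_one]
    have hexps : ((List.ofFn fun p => (i p - 1)).map fun j => Finsupp.single j 1).sum = μ := by
      rw [List.map_ofFn, hμ, ← List.sum_ofFn]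
      rfl
    rw [hexps, MvPolynomial.coeff_monomial, if_pos rfl]
  rw [hvanish] at hone
  exact zero_ne_one hone
end

section
/- Let r ≥ 2 and k ≥ 0 be integers. Every element of L_r(A_n) that is homogeneous of total degree r + k with respect to the standard grading of A_n (each generator x_i having degree 1) lies in the K-linear span of products g_1·g_2···g_{k+1} of exactly k+1 elements g_1, …, g_{k+1} of the Lie subalgebra of A_n generated by the generators x_1, …, x_n. -/
attribute [local instance 100] LieRing.ofAssociativeRing

/-!
Grade `FreeAlgebra K X` by word length and let `𝔏` be the Lie span of the generators. For `x ∈ 𝔏`,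
`ad x` is a derivation preserving `𝔏`, hence each `𝔏 ^ j`; writing a homogeneous element of
degree `i + 1` as a sum of products of `i + 1` generators then shows that its bracket with
`𝔏 ^ j` lies in `𝔏 ^ (i + j)`. By induction on `r ≥ 2`, `L_r` is therefore spanned by
homogeneous elements of degree `r + d` lying in `𝔏 ^ (d + 1)`, and projecting onto degree `r + k`
leaves an element of `𝔏 ^ (k + 1)`.
-/

open Submodule

theorem Ring.lie_mul {A : Type*} [Ring A] (x a b : A) : ⁅x, a * b⁆ = ⁅x, a⁆ * b + a * ⁅x, b⁆ := by
  simp only [Ring.lie_def]; noncomm_ring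

theorem Ring.mul_lie {A : Type*} [Ring A] (a b y : A) : ⁅a * b, y⁆ = a * ⁅b, y⁆ + ⁅a, y⁆ * b := by
  simp only [Ring.lie_def]; noncomm_ring

section LieSubalgebraPow

variable {K A : Type*} [CommRing K] [Ring A] [Algebra K A]

theorem lie_eq_zero_of_mem_one {x y : A} (hy : y ∈ (1 : Submodule K A)) : ⁅x, y⁆ = 0 := by
  obtain ⟨c, rfl⟩ := mem_one.mp hy
  rw [Ring.lie_def, Algebra.commutes, sub_self]

theorem lie_eq_zero_of_mem_one_left {x y : A} (hx : x ∈ (1 : Submodule K A)) : ⁅x, y⁆ = 0 := by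
  rw [← lie_skew, lie_eq_zero_of_mem_one hx, neg_zero]

variable (L : LieSubalgebra K A)

theorem LieSubalgebra.lie_mem_toSubmodule_pow {x y : A} (hx : x ∈ L) {j : ℕ}
    (hy : y ∈ L.toSubmodule ^ j) : ⁅x, y⁆ ∈ L.toSubmodule ^ j := by
  induction hy using Submodule.pow_induction_on_left' with
  | algebraMap c => rw [lie_eq_zero_of_mem_one (algebraMap_mem c)]; exact zero_mem _
  | add y z i _ _ hy hz => rw [lie_add]; exact add_mem hy hz
  | mem_mul m hm i y hy ih =>
    rw [Ring.lie_mul, pow_succ']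
    exact add_mem (mul_mem_mul (L.lie_mem hx hm) hy) (mul_mem_mul hm ih)

theorem LieSubalgebra.lie_mem_toSubmodule_pow_add {i j : ℕ} {x y : A}
    (hx : x ∈ L.toSubmodule ^ (i + 1)) (hy : y ∈ L.toSubmodule ^ j) :
    ⁅x, y⁆ ∈ L.toSubmodule ^ (i + j) := by
  induction i generalizing x with
  | zero => rw [pow_one] at hx; rw [zero_add]; exact L.lie_mem_toSubmodule_pow hx hy
  | succ i ih =>
    rw [pow_succ'] at hx
    refine Submodule.mul_induction_on hx (fun m hm a ha => ?_) fun a b ha hb => ?_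
    · rw [Ring.mul_lie]
      refine add_mem ?_ ?_
      · rw [add_right_comm, pow_succ']
        exact mul_mem_mul hm (ih ha)
      · rw [add_comm, pow_add]
        exact mul_mem_mul (L.lie_mem_toSubmodule_pow hm hy) ha
    · rw [add_lie]; exact add_mem ha hb

end LieSubalgebraPow

open scoped DirectSum

namespace FreeAlgebra

variable (R X : Type*) [CommSemiring R]

abbrev grade (i : ℕ) : Submodule R (FreeAlgebra R X) := span R (Set.range (ι R)) ^ i

variable {R X}

theorem ι_mem_grade_one (x : X) : ι R x ∈ grade R X 1 := by
  rw [grade, pow_one]; exact subset_span (Set.mem_range_self x)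

noncomputable def liftGraded : FreeAlgebra R X →ₐ[R] ⨁ i, grade R X i :=
  lift R fun x => DirectSum.of (fun i => grade R X i) 1 ⟨ι R x, ι_mem_grade_one x⟩

theorem liftGraded_of_mem_span {m : FreeAlgebra R X} (hm : m ∈ span R (Set.range (ι R))) :
    liftGraded m = DirectSum.lof R ℕ (fun i => grade R X i) 1 ⟨m, by rwa [grade, pow_one]⟩ := by
  induction hm using Submodule.span_induction with
  | mem m hm => obtain ⟨x, rfl⟩ := hm; exact lift_ι_apply _ x
  | zero => rw [map_zero]; exact (map_zero _).symm
  | add a b _ _ iha ihb => rw [map_add, iha, ihb, ← map_add]; rfl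
  | smul c a _ iha => rw [map_smul, iha, ← map_smul]; rfl

noncomputable instance gradedAlgebra : GradedAlgebra (grade R X) :=
  GradedAlgebra.ofAlgHom _ liftGraded (by ext x; simp [liftGraded]) fun i x => by
    obtain ⟨x, hx⟩ := x
    induction hx using Submodule.pow_induction_on_left' with
    | algebraMap r => rw [AlgHom.commutes, DirectSum.algebraMap_apply]; rfl
    | add x y i _ _ ihx ihy => rw [map_add, ihx, ihy, ← map_add]; rfl
    | mem_mul m hm i x _ ih =>
      rw [map_mul, ih, liftGraded_of_mem_span hm, DirectSum.lof_eq_of, DirectSum.of_mul_of]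
      exact DirectSum.of_eq_of_gradedMonoid_eq (Sigma.subtype_ext (add_comm _ _) rfl)

end FreeAlgebra

theorem DirectSum.mem_of_mem_iSup_inf_of_mem {ι κ R M : Type*} [DecidableEq ι] [Semiring R]
    [AddCommMonoid M] [Module R M] (𝒜 : ι → Submodule R M) [DirectSum.Decomposition 𝒜]
    {f : κ → ι} (hf : Function.Injective f) (N : κ → Submodule R M) {k : κ} {m : M}
    (hm : m ∈ 𝒜 (f k)) (hN : m ∈ ⨆ d, 𝒜 (f d) ⊓ N d) : m ∈ N k := by
  rw [← decompose_of_mem_same 𝒜 hm]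
  refine Submodule.iSup_induction (motive := fun x => (decompose 𝒜 x (f k) : M) ∈ N k) _ hN
    (fun d x hx => ?_) (by simp) fun x y hx hy => by
      rw [decompose_add, add_apply, Submodule.coe_add]; exact add_mem hx hy
  by_cases h : d = k
  · subst h; rw [decompose_of_mem_same 𝒜 hx.1]; exact hx.2
  · rw [decompose_of_mem_ne 𝒜 hx.1 (hf.ne h)]; exact zero_mem _

theorem SetLike.lie_mem_graded {ι σ A : Type*} [AddCommMonoid ι] [Ring A] [SetLike σ A]
    [AddSubgroupClass σ A] (𝒜 : ι → σ) [SetLike.GradedMul 𝒜] {i j : ι} {a b : A}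
    (ha : a ∈ 𝒜 i) (hb : b ∈ 𝒜 j) : ⁅a, b⁆ ∈ 𝒜 (i + j) := by
  rw [Ring.lie_def]
  exact sub_mem (SetLike.mul_mem_graded ha hb) (add_comm i j ▸ SetLike.mul_mem_graded hb ha)

theorem Submodule.pow_le_span_ofFn_prod {K A : Type*} [CommSemiring K] [Semiring A] [Algebra K A]
    (M : Submodule K A) (j : ℕ) :
    M ^ j ≤ span K {y | ∃ g : Fin j → A, (∀ p, g p ∈ M) ∧ y = (List.ofFn g).prod} := by
  rw [pow_eq_span_pow_set]
  refine span_mono fun y hy => ?_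
  obtain ⟨f, rfl⟩ := Set.mem_pow.mp hy
  exact ⟨fun p => f p, fun p => (f p).2, rfl⟩

namespace FreeAlgebra

section LowerCentral

variable (K X : Type*) [CommRing K]

abbrev lieSpanRangeι : Submodule K (FreeAlgebra K X) :=
  (LieSubalgebra.lieSpan K (FreeAlgebra K X) (Set.range (ι K))).toSubmodule

theorem grade_le_lieSpanRangeι_pow (i : ℕ) : grade K X i ≤ lieSpanRangeι K X ^ i :=
  pow_le_pow_left' (span_le.mpr LieSubalgebra.subset_lieSpan) i

def lcsBound (r : ℕ) : Submodule K (FreeAlgebra K X) :=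
  ⨆ d, grade K X (r + d) ⊓ lieSpanRangeι K X ^ (d + 1)

variable {K X}

theorem lie_mem_lcsBound_succ_of_mem_grade {a l : FreeAlgebra K X} {j r d : ℕ}
    (ha : a ∈ grade K X j) (hl : l ∈ grade K X (r + d) ⊓ lieSpanRangeι K X ^ (d + 1)) :
    ⁅a, l⁆ ∈ lcsBound K X (r + 1) := by
  cases j with
  | zero =>
    rw [lie_eq_zero_of_mem_one_left (K := K) (by rwa [grade, pow_zero] at ha)]
    exact zero_mem _
  | succ j =>
    refine mem_iSup_of_mem (j + d) ⟨?_, ?_⟩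
    · rw [show r + 1 + (j + d) = j + 1 + (r + d) by omega]
      exact SetLike.lie_mem_graded _ ha hl.1
    · rw [show j + d + 1 = j + (d + 1) by omega]
      exact LieSubalgebra.lie_mem_toSubmodule_pow_add _ (grade_le_lieSpanRangeι_pow K X _ ha) hl.2

theorem lie_mem_lcsBound_succ (a : FreeAlgebra K X) {r : ℕ} {l : FreeAlgebra K X}
    (hl : l ∈ grade K X 0 ⊔ lcsBound K X r) : ⁅a, l⁆ ∈ lcsBound K X (r + 1) := by
  obtain ⟨c, hc, s, hs, rfl⟩ := mem_sup.mp hl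
  rw [lie_add, lie_eq_zero_of_mem_one (K := K) (by rwa [grade, pow_zero] at hc), zero_add]
  have ha : a ∈ ⨆ j, grade K X j :=
    (DirectSum.Decomposition.isInternal (grade K X)).submodule_iSup_eq_top ▸ mem_top
  refine Submodule.iSup_induction (motive := fun a => ⁅a, s⁆ ∈ lcsBound K X (r + 1)) _ ha
    (fun j a ha => ?_) (by rw [zero_lie]; exact zero_mem _)
    fun a b ha hb => by rw [add_lie]; exact add_mem ha hb
  refine Submodule.iSup_induction (motive := fun s => ⁅a, s⁆ ∈ lcsBound K X (r + 1)) _ hs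
    (fun d s hs => ?_) (by rw [lie_zero]; exact zero_mem _)
    fun s t hs ht => by rw [lie_add]; exact add_mem hs ht
  exact lie_mem_lcsBound_succ_of_mem_grade ha hs

theorem top_le_grade_zero_sup_lcsBound_one : ⊤ ≤ grade K X 0 ⊔ lcsBound K X 1 := by
  rw [← (DirectSum.Decomposition.isInternal (grade K X)).submodule_iSup_eq_top, iSup_le_iff]
  rintro (_ | d)
  · exact le_sup_left
  · refine le_sup_of_le_right (le_iSup_of_le d (le_inf ?_ (grade_le_lieSpanRangeι_pow K X _)))
    rw [add_comm]

theorem lowerCentral_add_two_le_of_le {r : ℕ}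
    (h : lowerCentral K (FreeAlgebra K X) (r + 1) ≤ grade K X 0 ⊔ lcsBound K X (r + 1)) :
    lowerCentral K (FreeAlgebra K X) (r + 2) ≤ lcsBound K X (r + 2) := by
  rw [lowerCentral, span_le]
  rintro _ ⟨a, l, hl, rfl⟩
  exact lie_mem_lcsBound_succ a (h hl)

theorem lowerCentral_add_two_le_lcsBound (r : ℕ) :
    lowerCentral K (FreeAlgebra K X) (r + 2) ≤ lcsBound K X (r + 2) := by
  induction r with
  | zero => exact lowerCentral_add_two_le_of_le (le_top.trans top_le_grade_zero_sup_lcsBound_one)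
  | succ r ih => exact lowerCentral_add_two_le_of_le (ih.trans le_sup_right)

end LowerCentral

end FreeAlgebra

theorem pbw_degree_of_lower_central_general
    (K : Type*) [Field K]
    (n : ℕ) (r k : ℕ) (hr : 2 ≤ r)
    (m : FreeAlgebra K (Fin n))
    (hm : m ∈ lowerCentral K (FreeAlgebra K (Fin n)) r)
    (hdeg : m ∈ (Submodule.span K (Set.range (FreeAlgebra.ι K (X := Fin n)))) ^ (r + k)) :
    m ∈ Submodule.span K {y : FreeAlgebra K (Fin n) |
        ∃ g : Fin (k + 1) → FreeAlgebra K (Fin n),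
          (∀ p, g p ∈ LieSubalgebra.lieSpan K (FreeAlgebra K (Fin n))
              (Set.range (FreeAlgebra.ι K (X := Fin n)))) ∧
          y = (List.ofFn g).prod} := by
  obtain ⟨r, rfl⟩ : ∃ s, r = s + 2 := ⟨r - 2, by omega⟩
  refine Submodule.pow_le_span_ofFn_prod _ (k + 1) ?_
  exact DirectSum.mem_of_mem_iSup_inf_of_mem (FreeAlgebra.grade K (Fin n))
    (add_right_injective (r + 2)) (fun d => FreeAlgebra.lieSpanRangeι K (Fin n) ^ (d + 1)) hdeg
    (FreeAlgebra.lowerCentral_add_two_le_lcsBound r hm)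

/-- the PBW argument / Lemma 2.1: for `r ≥ 2` and `k ≥ 0`, every element of
`L_r(A_n)` that is homogeneous of total degree `r + k` (i.e. lies in the `(r+k)`-th power of
the span of the generators, the degree-`(r+k)` homogeneous component of the standard
grading of `A_n`) lies in the `K`-span of products `g_1 ⋯ g_{k+1}` of exactly `k + 1`
elements of the Lie subalgebra of `A_n` generated by the generators. -/
theorem pbw_degree_of_lower_central
    (K : Type*) [Field K] [CharZero K]
    (n : ℕ) (r k : ℕ) (hr : 2 ≤ r)
    (m : FreeAlgebra K (Fin n))
    (hm : m ∈ lowerCentral K (FreeAlgebra K (Fin n)) r)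
    (hdeg : m ∈ (Submodule.span K (Set.range (FreeAlgebra.ι K (X := Fin n)))) ^ (r + k)) :
    m ∈ Submodule.span K {y : FreeAlgebra K (Fin n) |
        ∃ g : Fin (k + 1) → FreeAlgebra K (Fin n),
          (∀ p, g p ∈ LieSubalgebra.lieSpan K (FreeAlgebra K (Fin n))
              (Set.range (FreeAlgebra.ι K (X := Fin n)))) ∧
          y = (List.ofFn g).prod} :=
  pbw_degree_of_lower_central_general K n r k hr m hm hdeg
end

section
/- Let n ≥ 2 and let i, j ≥ 2 be integers of the same parity (both even or both odd). Then the product of ideals M_i(A_n)·M_j(A_n) is NOT contained in M_{i+j}(A_n). -/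
open scoped TensorProduct
open Submodule

section Commutator

variable (K B : Type*) [CommRing K] [Ring B] [Algebra K B]

def LinearMap.commutator : B →ₗ[K] B →ₗ[K] B :=
  LinearMap.mul K B - (LinearMap.mul K B).flip

variable {K B}

@[simp]
lemma LinearMap.commutator_apply (a b : B) : LinearMap.commutator K B a b = ⁅a, b⁆ := by
  simp [LinearMap.commutator, Ring.lie_def]

namespace Submodule

lemma map₂_commutator_le {P Q R : Submodule K B} (h₁ : P * Q ≤ R) (h₂ : Q * P ≤ R) :
    map₂ (LinearMap.commutator K B) P Q ≤ R :=
  map₂_le.2 fun a ha b hb => by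
    rw [LinearMap.commutator_apply, Ring.lie_def]
    exact sub_mem (h₁ (mul_mem_mul ha hb)) (h₂ (mul_mem_mul hb ha))

lemma map₂_commutator_eq_bot {P Q : Submodule K B} (h : ∀ a ∈ P, ∀ b ∈ Q, Commute a b) :
    map₂ (LinearMap.commutator K B) P Q = ⊥ :=
  eq_bot_iff.2 <| map₂_le.2 fun a ha b hb => by
    simp [Ring.lie_def, (h a ha b hb).eq]

lemma map₂_commutator_one_sup_one_sup (P Q : Submodule K B) :
    map₂ (LinearMap.commutator K B) (1 ⊔ P) (1 ⊔ Q) = map₂ (LinearMap.commutator K B) P Q := by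
  have central : ∀ x ∈ (1 : Submodule K B), ∀ y : B, Commute x y := by
    intro x hx y
    obtain ⟨c, rfl⟩ := mem_one.1 hx
    exact Algebra.commutes c y
  rw [map₂_sup_left, map₂_sup_right, map₂_sup_right,
    map₂_commutator_eq_bot fun x hx y _ => central x hx y,
    map₂_commutator_eq_bot fun x hx y _ => central x hx y,
    map₂_commutator_eq_bot fun x _ y hy => (central y hy x).symm]
  simp

lemma map₂_commutator_map_le {B' : Type*} [Ring B'] [Algebra K B'] (f : B →ₐ[K] B')
    (P Q : Submodule K B) :
    map₂ (LinearMap.commutator K B') (map f.toLinearMap P) (map f.toLinearMap Q) ≤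
      map f.toLinearMap (P * Q ⊔ Q * P) := by
  rw [Submodule.map_sup, Submodule.map_mul, Submodule.map_mul]
  exact map₂_commutator_le le_sup_left le_sup_right

end Submodule

end Commutator

lemma FreeAlgebra.lift_mem_one_sup {K B X : Type*} [CommRing K] [Ring B] [Algebra K B]
    {P : Submodule K B} (hP : P * P ≤ P) {g : X → B} (hg : ∀ x, g x ∈ P) (a : FreeAlgebra K X) :
    FreeAlgebra.lift K g a ∈ 1 ⊔ P := by
  have hmul : (1 ⊔ P) * (1 ⊔ P) ≤ 1 ⊔ P := by
    rw [Submodule.mul_sup, Submodule.sup_mul, Submodule.sup_mul, one_mul, mul_one, one_mul]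
    exact sup_le (sup_le le_sup_left le_sup_right) (sup_le le_sup_right (hP.trans le_sup_right))
  let S : Subalgebra K B := (1 ⊔ P).toSubalgebra (one_le.1 le_sup_left)
    fun x y hx hy => hmul (mul_mem_mul hx hy)
  have hrange : (FreeAlgebra.lift K g).range ≤ S := by
    rw [← Algebra.adjoin_range_eq_range_freeAlgebra_lift, Algebra.adjoin_le_iff]
    rintro _ ⟨x, rfl⟩
    exact mem_sup_right (hg x)
  exact hrange ⟨a, rfl⟩

section LowerCentral

variable {K R B : Type*} [CommRing K] [Ring R] [Algebra K R] [Ring B] [Algebra K B]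

lemma lowerCentral_succ {k : ℕ} (hk : k ≠ 0) :
    lowerCentral K R (k + 1) =
      span K {x | ∃ a : R, ∃ l ∈ lowerCentral K R k, x = a * l - l * a} := by
  obtain ⟨k, rfl⟩ := Nat.exists_eq_succ_of_ne_zero hk
  rfl

lemma iterate_lie_mem_lowerCentral (x y : R) (k : ℕ) :
    (fun z => ⁅z, y⁆)^[k] x ∈ lowerCentral K R (k + 1) := by
  induction k with
  | zero => exact mem_top
  | succ k ih =>
    rw [Function.iterate_succ_apply', lowerCentral_succ k.succ_ne_zero]
    exact subset_span ⟨-y, _, ih, by simp only [Ring.lie_def, neg_mul, mul_neg]; abel⟩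

lemma lowerCentral_le_lcsIdeal (k : ℕ) : lowerCentral K R k ≤ lcsIdeal K R k :=
  fun l hl => subset_span ⟨1, 1, l, hl, by simp⟩

lemma lcsIdeal_le_ker (f : R →ₐ[K] B) {k : ℕ} (hf : ∀ l ∈ lowerCentral K R k, f l = 0) :
    lcsIdeal K R k ≤ LinearMap.ker f.toLinearMap :=
  span_le.2 <| by
    rintro _ ⟨a, b, l, hl, rfl⟩
    simp [hf l hl]

lemma apply_mem_of_mem_lowerCentral (f : R →ₐ[K] B) (W : ℕ → Submodule K B)
    (hf : ∀ a, f a ∈ 1 ⊔ W 1)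
    (hW : ∀ k, 1 ≤ k → map₂ (LinearMap.commutator K B) (W 1) (W k) ≤ W (k + 1))
    {k : ℕ} (hk : 2 ≤ k) {l : R} (hl : l ∈ lowerCentral K R k) : f l ∈ W k := by
  have step : ∀ m, 1 ≤ m → (∀ l ∈ lowerCentral K R m, f l ∈ 1 ⊔ W m) →
      lowerCentral K R (m + 1) ≤ (W (m + 1)).comap f.toLinearMap := by
    intro m hm h
    rw [lowerCentral_succ (by omega), span_le]
    rintro _ ⟨a, l, hl, rfl⟩
    have := apply_mem_map₂ (LinearMap.commutator K B) (hf a) (h l hl)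
    rw [map₂_commutator_one_sup_one_sup] at this
    simpa [Ring.lie_def] using hW m hm this
  have mem_one_sup : ∀ m, 1 ≤ m → ∀ l ∈ lowerCentral K R m, f l ∈ 1 ⊔ W m := by
    intro m hm
    induction m, hm using Nat.le_induction with
    | base => exact fun l _ => hf l
    | succ m hm ih => exact fun l hl => mem_sup_right (step m hm ih hl)
  obtain ⟨k, rfl⟩ : ∃ m, k = m + 1 := ⟨k - 1, by omega⟩
  exact step k (by omega) (mem_one_sup k (by omega)) hl

end LowerCentral

namespace Matrix

variable (K : Type*) [CommRing K] (m : ℕ)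

def upperFiltration (s : ℕ) : Submodule K (Matrix (Fin m) (Fin m) K) where
  carrier := {M | ∀ a b : Fin m, (b : ℕ) < a + s → M a b = 0}
  add_mem' hM hN a b h := by simp [hM a b h, hN a b h]
  zero_mem' _ _ _ := rfl
  smul_mem' c M hM a b h := by simp [hM a b h]

def upperShift : Matrix (Fin m) (Fin m) K :=
  of fun a b => if (b : ℕ) = a + 1 then 1 else 0

def topRowSingle (k : ℕ) : Matrix (Fin m) (Fin m) K :=
  of fun a b => if (a : ℕ) = 0 ∧ (b : ℕ) = k then 1 else 0

variable {K m}

lemma one_mem_upperFiltration_zero : (1 : Matrix (Fin m) (Fin m) K) ∈ upperFiltration K m 0 :=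
  fun _ _ h => one_apply_ne (by omega)

lemma upperFiltration_mul_le (s t : ℕ) :
    upperFiltration K m s * upperFiltration K m t ≤ upperFiltration K m (s + t) :=
  mul_le.2 fun M hM N hN a b h => by
    rw [mul_apply]
    refine Finset.sum_eq_zero fun c _ => ?_
    rcases lt_or_ge (c : ℕ) (a + s) with hc | hc
    · rw [hM a c hc, zero_mul]
    · rw [hN c b (by omega), mul_zero]

lemma upperFiltration_eq_bot {s : ℕ} (h : m ≤ s) : upperFiltration K m s = ⊥ :=
  eq_bot_iff.2 fun M hM => (mem_bot K).2 <| ext fun a b => hM a b (by omega)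

lemma upperShift_mem_upperFiltration : upperShift K m ∈ upperFiltration K m 1 :=
  fun a b h => by simp [upperShift]; omega

lemma topRowSingle_mem_upperFiltration (k : ℕ) : topRowSingle K m k ∈ upperFiltration K m k :=
  fun a b h => by simp [topRowSingle]; omega

lemma topRowSingle_mul_upperShift (k : ℕ) :
    topRowSingle K m k * upperShift K m = topRowSingle K m (k + 1) := by
  ext a b
  simp only [mul_apply, topRowSingle, upperShift, of_apply, ite_and, ite_mul, one_mul, zero_mul]
  rw [Fin.sum_univ_eq_sum_range fun c =>
    if (a : ℕ) = 0 then if c = k then if (b : ℕ) = c + 1 then (1 : K) else 0 else 0 else 0]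
  split_ifs with ha hb
  · simp [Finset.sum_ite_eq', hb, show k < m by have := b.isLt; omega]
  · simp [Finset.sum_ite_eq', hb]
  · simp

lemma upperShift_mul_topRowSingle (k : ℕ) : upperShift K m * topRowSingle K m k = 0 := by
  ext a b
  simp only [mul_apply, topRowSingle, upperShift, of_apply, zero_apply]
  exact Finset.sum_eq_zero fun c _ => by rcases eq_or_ne (c : ℕ) 0 with hc | hc <;> simp [hc]

lemma lie_topRowSingle_upperShift (k : ℕ) :
    ⁅topRowSingle K m k, upperShift K m⁆ = topRowSingle K m (k + 1) := by
  rw [Ring.lie_def, topRowSingle_mul_upperShift, upperShift_mul_topRowSingle, sub_zero]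

lemma topRowSingle_apply_zero_last (d k : ℕ) :
    topRowSingle K (d + 1) k 0 (Fin.last d) = if k = d then 1 else 0 := by
  simp [topRowSingle, eq_comm]

lemma one_apply_zero_last {d : ℕ} (hd : d ≠ 0) :
    (1 : Matrix (Fin (d + 1)) (Fin (d + 1)) K) 0 (Fin.last d) = 0 :=
  one_apply_ne (by simp [Fin.ext_iff, Fin.val_last, eq_comm, hd])

end Matrix

section TensorFiltration

open Algebra.TensorProduct

variable {K A C : Type*} [CommRing K] [Ring A] [Algebra K A] [Ring C] [Algebra K C]
  (U : ℕ → Submodule K A) (V : ℕ → Submodule K C)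

def tensorFiltration (m : ℕ) : Submodule K (A ⊗[K] C) :=
  span K {x | ∃ s t, m ≤ s + t ∧ ∃ a ∈ U s, ∃ c ∈ V t, x = a ⊗ₜ c}

def pureFiltration (k : ℕ) : Submodule K (A ⊗[K] C) :=
  map (includeLeft : A →ₐ[K] A ⊗[K] C).toLinearMap (U k) ⊔
    map (includeRight : C →ₐ[K] A ⊗[K] C).toLinearMap (V k)

def lieFiltration (k : ℕ) : Submodule K (A ⊗[K] C) :=
  pureFiltration U V k ⊔ tensorFiltration U V (k + 1)

variable {U V}

lemma tensorFiltration_antitone : Antitone (tensorFiltration U V) :=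
  fun _ _ h => span_mono fun _ ⟨s, t, hst, rest⟩ => ⟨s, t, h.trans hst, rest⟩

lemma tensorFiltration_mul_le (hU : ∀ s t, U s * U t ≤ U (s + t))
    (hV : ∀ s t, V s * V t ≤ V (s + t)) (m m' : ℕ) :
    tensorFiltration U V m * tensorFiltration U V m' ≤ tensorFiltration U V (m + m') := by
  rw [tensorFiltration, tensorFiltration, span_mul_span, span_le]
  rintro _ ⟨_, ⟨s, t, hst, a, ha, c, hc, rfl⟩, _, ⟨s', t', hst', a', ha', c', hc', rfl⟩, rfl⟩
  exact subset_span ⟨s + s', t + t', by omega, a * a', hU s s' (mul_mem_mul ha ha'),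
    c * c', hV t t' (mul_mem_mul hc hc'), tmul_mul_tmul a a' c c'⟩

lemma tensorFiltration_eq_bot {a b : ℕ} (hU : ∀ s, a < s → U s = ⊥)
    (hV : ∀ t, b < t → V t = ⊥) : tensorFiltration U V (a + b + 1) = ⊥ := by
  rw [tensorFiltration, span_eq_bot]
  rintro _ ⟨s, t, hst, x, hx, y, hy, rfl⟩
  rcases lt_or_ge a s with hs | hs
  · rw [hU s hs, mem_bot] at hx
    simp [hx]
  · rw [hV t (by omega), mem_bot] at hy
    simp [hy]

lemma map₂_commutator_le_tensorFiltration (hU : ∀ s t, U s * U t ≤ U (s + t))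
    (hV : ∀ s t, V s * V t ≤ V (s + t)) {P Q : Submodule K (A ⊗[K] C)} {m m' : ℕ}
    (hP : P ≤ tensorFiltration U V m) (hQ : Q ≤ tensorFiltration U V m') :
    map₂ (LinearMap.commutator K (A ⊗[K] C)) P Q ≤ tensorFiltration U V (m + m') :=
  map₂_commutator_le ((mul_le_mul' hP hQ).trans (tensorFiltration_mul_le hU hV m m'))
    ((mul_le_mul' hQ hP).trans (add_comm m m' ▸ tensorFiltration_mul_le hU hV m' m))

lemma pureFiltration_le_tensorFiltration (hU : 1 ∈ U 0) (hV : 1 ∈ V 0) (k : ℕ) :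
    pureFiltration U V k ≤ tensorFiltration U V k := by
  refine sup_le (map_le_iff_le_comap.2 fun a ha => ?_) (map_le_iff_le_comap.2 fun c hc => ?_)
  · exact subset_span ⟨k, 0, le_rfl, a, ha, 1, hV, rfl⟩
  · exact subset_span ⟨0, k, by omega, 1, hU, c, hc, rfl⟩

lemma map₂_commutator_pureFiltration_le (hU : ∀ s t, U s * U t ≤ U (s + t))
    (hV : ∀ s t, V s * V t ≤ V (s + t)) (k : ℕ) :
    map₂ (LinearMap.commutator K (A ⊗[K] C)) (pureFiltration U V 1) (pureFiltration U V k) ≤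
      pureFiltration U V (k + 1) := by
  have hLR : ∀ (P : Submodule K A) (Q : Submodule K C),
      ∀ x ∈ map (includeLeft : A →ₐ[K] A ⊗[K] C).toLinearMap P,
      ∀ y ∈ map (includeRight : C →ₐ[K] A ⊗[K] C).toLinearMap Q, Commute x y := by
    rintro P Q _ ⟨a, -, rfl⟩ _ ⟨c, -, rfl⟩
    simp [Commute, SemiconjBy, tmul_mul_tmul]
  rw [pureFiltration, pureFiltration, map₂_sup_left, map₂_sup_right, map₂_sup_right,
    map₂_commutator_eq_bot (hLR _ _),
    map₂_commutator_eq_bot fun x hx y hy => (hLR _ _ y hy x hx).symm, bot_sup_eq, sup_bot_eq]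
  refine sup_le_sup ((map₂_commutator_map_le _ _ _).trans (map_mono ?_))
    ((map₂_commutator_map_le _ _ _).trans (map_mono ?_))
  · exact sup_le ((hU 1 k).trans (by rw [add_comm])) (hU k 1)
  · exact sup_le ((hV 1 k).trans (by rw [add_comm])) (hV k 1)

lemma tmul_one_add_one_tmul_mem_pureFiltration {k : ℕ} {a : A} {c : C} (ha : a ∈ U k)
    (hc : c ∈ V k) : a ⊗ₜ[K] (1 : C) + (1 : A) ⊗ₜ c ∈ pureFiltration U V k :=
  add_mem_sup (mem_map_of_mem ha) (mem_map_of_mem hc)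

lemma lieFiltration_le_tensorFiltration (hU : 1 ∈ U 0) (hV : 1 ∈ V 0) (k : ℕ) :
    lieFiltration U V k ≤ tensorFiltration U V k :=
  sup_le (pureFiltration_le_tensorFiltration hU hV k) (tensorFiltration_antitone k.le_succ)

lemma lieFiltration_one_mul_le (hU : ∀ s t, U s * U t ≤ U (s + t))
    (hV : ∀ s t, V s * V t ≤ V (s + t)) (hU₀ : 1 ∈ U 0) (hV₀ : 1 ∈ V 0) :
    lieFiltration U V 1 * lieFiltration U V 1 ≤ lieFiltration U V 1 :=
  (mul_le_mul' (lieFiltration_le_tensorFiltration hU₀ hV₀ 1)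
    (lieFiltration_le_tensorFiltration hU₀ hV₀ 1)).trans
      ((tensorFiltration_mul_le hU hV 1 1).trans le_sup_right)

lemma map₂_commutator_lieFiltration_le (hU : ∀ s t, U s * U t ≤ U (s + t))
    (hV : ∀ s t, V s * V t ≤ V (s + t)) (hU₀ : 1 ∈ U 0) (hV₀ : 1 ∈ V 0) (k : ℕ) :
    map₂ (LinearMap.commutator K (A ⊗[K] C)) (lieFiltration U V 1) (lieFiltration U V k) ≤
      lieFiltration U V (k + 1) := by
  have htail : ∀ m, k + 2 ≤ m → tensorFiltration U V m ≤ lieFiltration U V (k + 1) :=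
    fun m hm => (tensorFiltration_antitone hm).trans le_sup_right
  rw [lieFiltration, lieFiltration, map₂_sup_left, map₂_sup_right]
  refine sup_le (sup_le ?_ ?_) ?_
  · exact (map₂_commutator_pureFiltration_le hU hV k).trans le_sup_left
  · exact (map₂_commutator_le_tensorFiltration hU hV
      (pureFiltration_le_tensorFiltration hU₀ hV₀ 1) le_rfl).trans (htail _ (by omega))
  · exact (map₂_commutator_le_tensorFiltration hU hV le_rfl
      (lieFiltration_le_tensorFiltration hU₀ hV₀ k)).trans (htail _ (by omega))

lemma lieFiltration_eq_bot {a b : ℕ} (hU : ∀ s, a < s → U s = ⊥) (hV : ∀ t, b < t → V t = ⊥)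
    (ha : a ≠ 0) (hb : b ≠ 0) : lieFiltration U V (a + b) = ⊥ := by
  rw [lieFiltration, pureFiltration, hU _ (by omega), hV _ (by omega),
    tensorFiltration_eq_bot hU hV]
  simp

lemma lie_tmul_one_add_one_tmul (a a' : A) (c c' : C) :
    ⁅a ⊗ₜ[K] (1 : C) + (1 : A) ⊗ₜ c, a' ⊗ₜ[K] (1 : C) + (1 : A) ⊗ₜ c'⁆ =
      ⁅a, a'⁆ ⊗ₜ[K] (1 : C) + (1 : A) ⊗ₜ ⁅c, c'⁆ := by
  simp only [Ring.lie_def, add_mul, mul_add, tmul_mul_tmul, one_mul, mul_one,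
    TensorProduct.sub_tmul, TensorProduct.tmul_sub]
  abel

lemma mul'_map_tmul_one_add_one_tmul_mul (f : A →ₗ[K] K) (g : C →ₗ[K] K) (hf : f 1 = 0)
    (hg : g 1 = 0) (a a' : A) (c c' : C) :
    (LinearMap.mul' K K ∘ₗ TensorProduct.map f g)
        ((a ⊗ₜ[K] (1 : C) + (1 : A) ⊗ₜ c) * (a' ⊗ₜ[K] (1 : C) + (1 : A) ⊗ₜ c')) =
      f a * g c' + f a' * g c := by
  simp only [add_mul, mul_add, tmul_mul_tmul, one_mul, mul_one, map_add, LinearMap.comp_apply,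
    TensorProduct.map_tmul, LinearMap.mul'_apply, hf, hg, mul_zero, zero_mul, add_zero, zero_add]
  ring

end TensorFiltration

section ShiftRepresentation

open Matrix

variable (K : Type*) [CommRing K] (p q n : ℕ)

noncomputable def shiftRep :
    FreeAlgebra K (Fin n) →ₐ[K]
      Matrix (Fin (p + 1)) (Fin (p + 1)) K ⊗[K] Matrix (Fin (q + 1)) (Fin (q + 1)) K :=
  FreeAlgebra.lift K fun t =>
    if (t : ℕ) = 0 then topRowSingle K _ 1 ⊗ₜ 1 + 1 ⊗ₜ topRowSingle K _ 1
    else if (t : ℕ) = 1 then upperShift K _ ⊗ₜ 1 + 1 ⊗ₜ upperShift K _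
    else 0

noncomputable def cornerPairing :
    Matrix (Fin (p + 1)) (Fin (p + 1)) K ⊗[K] Matrix (Fin (q + 1)) (Fin (q + 1)) K →ₗ[K] K :=
  LinearMap.mul' K K ∘ₗ
    TensorProduct.map (entryLinearMap K K 0 (Fin.last p)) (entryLinearMap K K 0 (Fin.last q))

variable {K p q n}

lemma shiftRep_apply_mem (a : FreeAlgebra K (Fin n)) :
    shiftRep K p q n a ∈
      1 ⊔ lieFiltration (upperFiltration K (p + 1)) (upperFiltration K (q + 1)) 1 := by
  have hmul := lieFiltration_one_mul_le (upperFiltration_mul_le (K := K) (m := p + 1))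
    (upperFiltration_mul_le (K := K) (m := q + 1)) one_mem_upperFiltration_zero
    one_mem_upperFiltration_zero
  rw [shiftRep]
  refine FreeAlgebra.lift_mem_one_sup hmul (fun t => mem_sup_left ?_) a
  split_ifs
  · exact tmul_one_add_one_tmul_mem_pureFiltration (topRowSingle_mem_upperFiltration 1)
      (topRowSingle_mem_upperFiltration 1)
  · exact tmul_one_add_one_tmul_mem_pureFiltration upperShift_mem_upperFiltration
      upperShift_mem_upperFiltration
  · exact zero_mem _

lemma lcsIdeal_le_ker_shiftRep (hp : p ≠ 0) (hq : q ≠ 0) :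
    lcsIdeal K (FreeAlgebra K (Fin n)) (p + q) ≤ LinearMap.ker (shiftRep K p q n).toLinearMap := by
  have hbot : lieFiltration (upperFiltration K (p + 1)) (upperFiltration K (q + 1)) (p + q) = ⊥ :=
    lieFiltration_eq_bot (fun _ hs => upperFiltration_eq_bot hs)
      (fun _ ht => upperFiltration_eq_bot ht) hp hq
  refine lcsIdeal_le_ker _ fun l hl => ?_
  have := apply_mem_of_mem_lowerCentral _
    (lieFiltration (upperFiltration K (p + 1)) (upperFiltration K (q + 1))) shiftRep_apply_mem
    (fun k _ => map₂_commutator_lieFiltration_le (upperFiltration_mul_le (K := K) (m := p + 1))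
      (upperFiltration_mul_le (K := K) (m := q + 1)) one_mem_upperFiltration_zero
      one_mem_upperFiltration_zero k) (by omega) hl
  rwa [hbot, mem_bot] at this

lemma shiftRep_iterate_lie (h₀ : 0 < n) (h₁ : 1 < n) (k : ℕ) :
    shiftRep K p q n ((fun z => ⁅z, FreeAlgebra.ι K ⟨1, h₁⟩⁆)^[k] (FreeAlgebra.ι K ⟨0, h₀⟩)) =
      topRowSingle K _ (k + 1) ⊗ₜ 1 + 1 ⊗ₜ topRowSingle K _ (k + 1) := by
  induction k with
  | zero => simp [shiftRep]
  | succ k ih =>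
    have hy : shiftRep K p q n (FreeAlgebra.ι K ⟨1, h₁⟩) =
        upperShift K _ ⊗ₜ 1 + 1 ⊗ₜ upperShift K _ := by
      simp [shiftRep]
    rw [Function.iterate_succ_apply', Ring.lie_def, map_sub, map_mul, map_mul, ← Ring.lie_def, ih,
      hy, lie_tmul_one_add_one_tmul, lie_topRowSingle_upperShift, lie_topRowSingle_upperShift]

lemma cornerPairing_mul_topRowSingle (hp : p ≠ 0) (hq : q ≠ 0) :
    cornerPairing K p q ((topRowSingle K _ p ⊗ₜ 1 + 1 ⊗ₜ topRowSingle K _ p) *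
        (topRowSingle K _ q ⊗ₜ 1 + 1 ⊗ₜ topRowSingle K _ q)) =
      1 + if p = q then 1 else 0 := by
  rw [cornerPairing, mul'_map_tmul_one_add_one_tmul_mul _ _ (one_apply_zero_last hp)
    (one_apply_zero_last hq)]
  by_cases h : p = q <;> simp [topRowSingle_apply_zero_last, h, eq_comm]

end ShiftRepresentation

theorem not_contained_same_parity_general
    (K : Type*) [Field K] [CharZero K]
    (n : ℕ) (hn : 2 ≤ n) (i j : ℕ) (hi : 2 ≤ i) (hj : 2 ≤ j) :
    ¬ lcsIdeal K (FreeAlgebra K (Fin n)) i * lcsIdeal K (FreeAlgebra K (Fin n)) j ≤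
        lcsIdeal K (FreeAlgebra K (Fin n)) (i + j) := by
  intro hle
  obtain ⟨i, rfl⟩ : ∃ m, i = m + 1 := ⟨i - 1, by omega⟩
  obtain ⟨j, rfl⟩ : ∃ m, j = m + 1 := ⟨j - 1, by omega⟩
  let w : ℕ → FreeAlgebra K (Fin n) := fun k =>
    (fun z => ⁅z, FreeAlgebra.ι K ⟨1, hn⟩⁆)^[k] (FreeAlgebra.ι K ⟨0, by omega⟩)
  have hw : ∀ k, w k ∈ lcsIdeal K _ (k + 1) := fun k =>
    lowerCentral_le_lcsIdeal _ (iterate_lie_mem_lowerCentral _ _ k)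
  have hzero : shiftRep K (i + 1) (j + 1) n (w i * w j) = 0 :=
    lcsIdeal_le_ker_shiftRep i.succ_ne_zero j.succ_ne_zero (hle (mul_mem_mul (hw i) (hw j)))
  have := congrArg (cornerPairing K (i + 1) (j + 1)) hzero
  rw [map_mul, shiftRep_iterate_lie, shiftRep_iterate_lie,
    cornerPairing_mul_topRowSingle i.succ_ne_zero j.succ_ne_zero, map_zero] at this
  split_ifs at this <;> norm_num at this

/-- Theorem 5.1, same parity: for `n ≥ 2` and `i, j ≥ 2` of the same parity,
`M_i(A_n) · M_j(A_n)` is not contained in `M_{i+j}(A_n)`. -/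
theorem not_contained_same_parity
    (K : Type*) [Field K] [CharZero K]
    (n : ℕ) (hn : 2 ≤ n) (i j : ℕ) (hi : 2 ≤ i) (hj : 2 ≤ j)
    (hpar : i % 2 = j % 2) :
    ¬ lcsIdeal K (FreeAlgebra K (Fin n)) i * lcsIdeal K (FreeAlgebra K (Fin n)) j ≤
        lcsIdeal K (FreeAlgebra K (Fin n)) (i + j) :=
  not_contained_same_parity_general K n hn i j hi hj
end
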